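/- arXiv:2601.16243 — 10 statements merged into one kernel-verified Lean document; each statement's English description precedes it below -/
import Mathlib

section
/- Let d be a positive integer, G a finite group, F a GCA on G^{Z^d}, and w a group word with verbal subgroup H = w(G). Then F is topologically transitive if and only if both of the following hold: (i) the restriction of F to the closed subgroup H^{Z^d} = {c ∈ G^{Z^d} : c_v ∈ H for all v ∈ Z^d} is topologically transitive, and (ii) every map F~ : (G/H)^{Z^d} → (G/H)^{Z^d} satisfying F~ ∘ pi = pi ∘ F (where pi : G^{Z^d} → (G/H)^{Z^d} is the pointwise quotient map c ↦ (c_v H)_v) is topologically transitive. -/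
/-!
The quotient system is a factor of `F`. For the restriction, finiteness of `G` gives a single
word `u` in the verbal subgroup of the free group whose values exhaust `H`; evaluating `u` at
far apart shifts of a configuration is a continuous map `G^{ℤ^d} → H^{ℤ^d}` that intertwines `F`
with its restriction and meets every cylinder, so transitivity passes to the restriction.

Conversely, transitive group cellular automata are surjective, hence preserve Haar measure, so
the hitting times of the quotient system are syndetic. Transitivity and shift invariance of the
restriction make the times at which it produces any pattern on a window, starting from a
configuration trivial there, a thick set. At a common time, a lift of a quotient orbit is
corrected by such an `H`-configuration.
-/

/-- A self-map `T` of a topological space `X` is topologically transitive if for all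
nonempty open sets `U, V ⊆ X` there exists `n ≥ 0` with `T^n(U) ∩ V ≠ ∅`. -/
def TopologicallyTransitive {X : Type*} [TopologicalSpace X] (T : X → X) : Prop :=
  ∀ U V : Set X, IsOpen U → IsOpen V → U.Nonempty → V.Nonempty →
    ∃ n : ℕ, (T^[n] '' U ∩ V).Nonempty

/-- The verbal subgroup of `G` associated with a group word `w` (an element of the free
group on countably many generators): the subgroup generated by all values of `w`, i.e. by
the image of `w` under all homomorphisms from the free group to `G`. -/
def verbalSubgroup (G : Type*) [Group G] (w : FreeGroup ℕ) : Subgroup G :=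
  Subgroup.closure (Set.range fun φ : FreeGroup ℕ →* G => φ w)

open Function Set

def IsSyndetic (s : Set ℕ) : Prop :=
  ∃ K, ∀ m, ∃ n ∈ s, m ≤ n ∧ n ≤ m + K

def IsThick (s : Set ℕ) : Prop :=
  ∀ L, ∃ r, ∀ j ≤ L, r + j ∈ s

theorem IsSyndetic.inter_nonempty {s t : Set ℕ} (hs : IsSyndetic s) (ht : IsThick t) :
    (s ∩ t).Nonempty := by
  obtain ⟨K, hK⟩ := hs
  obtain ⟨r, hr⟩ := ht K
  obtain ⟨n, hn, hrn, hnr⟩ := hK r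
  refine ⟨n, hn, ?_⟩
  simpa [Nat.add_sub_cancel' hrn] using hr (n - r) (by omega)

/-- If the return times of `A` had arbitrarily long gaps, one could choose infinitely many times
`t₀ < t₁ < ⋯` whose differences are never return times; the sets `f^[tᵢ] ⁻¹' A` would then be
pairwise disjoint of equal positive measure. -/
theorem MeasureTheory.MeasurePreserving.isSyndetic_returns {α : Type*} [MeasurableSpace α]
    {μ : Measure α} [IsFiniteMeasure μ] {f : α → α} (hf : MeasurePreserving f μ μ) {A : Set α}
    (hA : MeasurableSet A) (hA₀ : μ A ≠ 0) : IsSyndetic {n | (A ∩ f^[n] ⁻¹' A).Nonempty} := by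
  by_contra! h
  simp only [IsSyndetic, not_exists, not_forall, mem_ofPred_eq, not_and, not_le] at h
  choose gap hgap using h
  set t : ℕ → ℕ := fun i => (fun s => gap s + s)^[i] 0
  have ht_succ : ∀ i, t (i + 1) = gap (t i) + t i := fun i => iterate_succ_apply' _ _ _
  have ht_mono : Monotone t := monotone_nat_of_le_succ fun i => by rw [ht_succ]; omega
  have hgaps : ∀ i j, i < j → ¬ (A ∩ f^[t j - t i] ⁻¹' A).Nonempty := by
    intro i j hij hne
    obtain ⟨k, rfl⟩ := Nat.exists_eq_add_of_lt hij
    have := hgap (t (i + k)) (t (i + k + 1) - t i) hne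
    have := ht_mono (Nat.le_add_right i k)
    rw [ht_succ] at *
    omega
  obtain ⟨i, j, hij, z, hzi, hzj⟩ := exists_nonempty_inter_of_measure_univ_lt_tsum_measure μ
    (s := fun i => f^[t i] ⁻¹' A) (fun i => ((hf.iterate _).measurable hA).nullMeasurableSet)
    (by simp only [fun i => (hf.iterate (t i)).measure_preimage hA.nullMeasurableSet,
          ENNReal.tsum_const_eq_top_of_ne_zero hA₀, measure_lt_top])
  wlog hlt : i < j generalizing i j z
  · exact this j i hij.symm z hzj hzi (by omega)
  refine hgaps i j hlt ⟨f^[t i] z, hzi, ?_⟩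
  rwa [mem_preimage, ← iterate_add_apply, Nat.sub_add_cancel (ht_mono hlt.le)]

namespace TopologicallyTransitive

variable {X Y : Type*} [TopologicalSpace X] [TopologicalSpace Y] {f : X → X}

theorem exists_iterate_of_semiconj {g : Y → Y} {π : X → Y} (hf : TopologicallyTransitive f)
    (hπ : Continuous π) (h : Semiconj π f g) {U V : Set Y} (hU : IsOpen U) (hV : IsOpen V)
    (hU' : (π ⁻¹' U).Nonempty) (hV' : (π ⁻¹' V).Nonempty) : ∃ n, (g^[n] '' U ∩ V).Nonempty := by
  obtain ⟨n, -, ⟨x, hxU, rfl⟩, hxV⟩ :=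
    hf (π ⁻¹' U) (π ⁻¹' V) (hU.preimage hπ) (hV.preimage hπ) hU' hV'
  exact ⟨n, _, ⟨π x, hxU, (h.iterate_right n x).symm⟩, hxV⟩

theorem of_semiconj {g : Y → Y} {π : X → Y} (hf : TopologicallyTransitive f)
    (hπ : Continuous π) (hd : DenseRange π) (h : Semiconj π f g) : TopologicallyTransitive g :=
  fun _ _ hU hV hUne hVne => hf.exists_iterate_of_semiconj hπ h hU hV
    (hd.exists_mem_open hU hUne) (hd.exists_mem_open hV hVne)

/-- Transitivity between two disjoint open subsets of `V` needs a time `n ≥ 1`, which produces a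
point of `V` in the range of `f`. -/
theorem denseRange [T2Space X] [PerfectSpace X] (hf : TopologicallyTransitive f) :
    DenseRange f := by
  refine dense_iff_inter_open.mpr fun V hV ⟨x, hx⟩ => ?_
  obtain ⟨y, ⟨-, hyV⟩, hyx⟩ := accPt_iff_nhds.mp (hV.preperfect x hx) univ Filter.univ_mem
  obtain ⟨u₁, u₂, hu₁, hu₂, hyu₁, hxu₂, hdisj⟩ := t2_separation hyx
  obtain ⟨n, -, ⟨z, ⟨hz₂, -⟩, rfl⟩, hz₁, hzV⟩ := hf (u₂ ∩ V) (u₁ ∩ V) (hu₂.inter hV)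
    (hu₁.inter hV) ⟨x, hxu₂, hx⟩ ⟨y, hyu₁, hyV⟩
  obtain _ | n := n
  · exact absurd rfl (hdisj.ne_of_mem hz₁ hz₂)
  · exact ⟨_, hzV, _, (iterate_succ_apply' f n z).symm⟩

theorem surjective [CompactSpace X] [T2Space X] [PerfectSpace X] (hf : TopologicallyTransitive f)
    (hc : Continuous f) : Surjective f :=
  range_eq_univ.mp <|
    (isCompact_range hc).isClosed.closure_eq.symm.trans hf.denseRange.closure_range

open MeasureTheory in
theorem isSyndetic [MeasurableSpace X] [OpensMeasurableSpace X] {μ : Measure X}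
    [IsFiniteMeasure μ] [μ.IsOpenPosMeasure] (hf : TopologicallyTransitive f) (hc : Continuous f)
    (hμ : MeasurePreserving f μ μ) {U V : Set X} (hU : IsOpen U) (hV : IsOpen V)
    (hUne : U.Nonempty) (hVne : V.Nonempty) : IsSyndetic {n | (f^[n] '' U ∩ V).Nonempty} := by
  obtain ⟨k, -, ⟨x, hxU, rfl⟩, hxV⟩ := hf U V hU hV hUne hVne
  have hW : IsOpen (U ∩ f^[k] ⁻¹' V) := hU.inter (hV.preimage (hc.iterate k))
  obtain ⟨K, hK⟩ := hμ.isSyndetic_returns hW.measurableSet (hW.measure_ne_zero μ ⟨x, hxU, hxV⟩)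
  refine ⟨K + k, fun m => ?_⟩
  obtain ⟨n, ⟨y, ⟨hyU, -⟩, -, hyV⟩, hmn, hnK⟩ := hK m
  refine ⟨k + n, ⟨_, ⟨y, hyU, rfl⟩, ?_⟩, by omega, by omega⟩
  rwa [iterate_add_apply]

end TopologicallyTransitive

section Configurations

variable {ι K : Type*}

def cylinder (x : ι → K) (S : Finset ι) : Set (ι → K) :=
  {c | ∀ v ∈ S, c v = x v}

variable [TopologicalSpace K]

theorem isOpen_cylinder [DiscreteTopology K] (x : ι → K) (S : Finset ι) :
    IsOpen (cylinder x S) := by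
  simpa [cylinder, Set.pi] using
    isOpen_set_pi (s := fun v => {x v}) S.finite_toSet fun v _ => isOpen_discrete _

theorem exists_cylinder_subset {U : Set (ι → K)} (hU : IsOpen U) {x : ι → K} (hx : x ∈ U) :
    ∃ S : Finset ι, cylinder x S ⊆ U := by
  obtain ⟨S, u, hu, hsub⟩ := isOpen_pi_iff.mp hU x hx
  exact ⟨S, fun c hc => hsub fun v hv => (hc v hv).symm ▸ (hu v hv).2⟩

/-- Every fibre of `f` is open, hence a union of basic open sets, finitely many of which cover
the compact space `ι → K`. -/
theorem Continuous.exists_finset_dependsOn [CompactSpace K] {K' : Type*} [TopologicalSpace K']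
    [DiscreteTopology K'] {f : (ι → K) → K'} (hf : Continuous f) :
    ∃ T : Finset ι, DependsOn f T := by
  classical
  choose I u hu hsub using fun c => isOpen_pi_iff.mp ((isOpen_discrete {f c}).preimage hf) c rfl
  obtain ⟨t, ht⟩ := isCompact_univ.elim_finite_subcover (fun c => (I c : Set ι).pi (u c))
    (fun c => isOpen_set_pi (I c).finite_toSet fun v hv => (hu c v hv).1)
    fun c _ => mem_iUnion.mpr ⟨c, fun v hv => (hu c v hv).2⟩
  refine ⟨t.biUnion I, fun c c' hcc' => ?_⟩
  obtain ⟨c₀, hc₀, hc⟩ := mem_iUnion₂.mp (ht (mem_univ c))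
  have hc' : c' ∈ (I c₀ : Set ι).pi (u c₀) := fun v hv =>
    hcc' v (Finset.mem_biUnion.mpr ⟨c₀, hc₀, hv⟩) ▸ hc v hv
  exact (hsub c₀ hc).trans (hsub c₀ hc').symm

instance Pi.perfectSpace [Infinite ι] [Nontrivial K] : PerfectSpace (ι → K) := by
  classical
  refine ⟨fun x _ => accPt_iff_nhds.mpr fun U hU => ?_⟩
  obtain ⟨O, hOU, hO, hxO⟩ := mem_nhds_iff.mp hU
  obtain ⟨S, hS⟩ := exists_cylinder_subset hO hxO
  obtain ⟨v, hv⟩ := S.exists_notMem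
  obtain ⟨k, hk⟩ := exists_ne (x v)
  refine ⟨update x v k, ⟨hOU (hS fun i hi => ?_), trivial⟩,
    fun h => hk (by simpa using congrFun h v)⟩
  exact update_of_ne (ne_of_mem_of_not_mem hi hv) _ _

variable [DiscreteTopology K] [Finite K]

theorem TopologicallyTransitive.surjective_pi [Infinite ι] {f : (ι → K) → ι → K}
    (hf : TopologicallyTransitive f) (hc : Continuous f) : Surjective f := by
  rcases subsingleton_or_nontrivial K with _ | _
  · exact fun y => ⟨y, Subsingleton.elim _ _⟩
  · exact hf.surjective hc

/-- A surjective continuous endomorphism of the compact group `ι → K` preserves Haar measure. -/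
theorem TopologicallyTransitive.isSyndetic_of_map_mul [Infinite ι] [Group K]
    {f : (ι → K) → ι → K} (hf : TopologicallyTransitive f) (hc : Continuous f)
    (hmul : ∀ a b, f (a * b) = f a * f b) {U V : Set (ι → K)} (hU : IsOpen U) (hV : IsOpen V)
    (hUne : U.Nonempty) (hVne : V.Nonempty) : IsSyndetic {n | (f^[n] '' U ∩ V).Nonempty} := by
  borelize (ι → K)
  exact hf.isSyndetic hc (μ := MeasureTheory.Measure.haar)
    ((MonoidHom.mk' f hmul).measurePreserving hc (hf.surjective_pi hc) rfl) hU hV hUne hVne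

end Configurations

theorem exists_translates_injective {d : ℕ} (hd : 0 < d) (S : Finset (Fin d → ℤ)) :
    ∃ D : ℕ → Fin d → ℤ, Injective fun p : ℕ × S => (p.2 : Fin d → ℤ) + D p.1 := by
  set i₀ : Fin d := ⟨0, hd⟩
  set R : ℕ := S.sup fun v => (v i₀).natAbs
  have hR : ∀ v ∈ S, |v i₀| ≤ R := fun v hv => by
    rw [Int.abs_eq_natAbs]; exact_mod_cast Finset.le_sup (f := fun v => (v i₀).natAbs) hv
  refine ⟨fun n => Pi.single i₀ (n * (2 * R + 1)), ?_⟩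
  rintro ⟨n, v, hv⟩ ⟨n', v', hv'⟩ h
  have hi₀ : v i₀ + n * (2 * R + 1) = v' i₀ + n' * (2 * R + 1) := by
    simpa using congrFun h i₀
  have hv₀ : v' i₀ - v i₀ = 0 := by
    refine Int.eq_zero_of_abs_lt_dvd (m := 2 * R + 1) ⟨n - n', by linarith⟩ ?_
    have := abs_le.mp (hR v hv)
    have := abs_le.mp (hR v' hv')
    exact abs_lt.mpr ⟨by linarith, by linarith⟩
  obtain rfl : n = n' := by
    have : ((n : ℤ) - n') * (2 * R + 1) = 0 := by linarith
    simpa [sub_eq_zero, (by positivity : (2 * (R : ℤ) + 1) ≠ 0)] using this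
  simpa using h

/-- Place, at pairwise far apart positions, a preimage under `Φ^[j]` of every pattern on `S` and
every `j ≤ L`, and reach this configuration from the cylinder of `1` by transitivity; shifting
the orbit point to the right position then realises any prescribed pattern at time `r + j`. -/
theorem TopologicallyTransitive.isThick {d : ℕ} (hd : 0 < d) {K : Type*} [One K] [Finite K]
    [TopologicalSpace K] [DiscreteTopology K] {Φ : ((Fin d → ℤ) → K) → (Fin d → ℤ) → K}
    (hf : TopologicallyTransitive Φ) (hc : Continuous Φ)
    (hsh : ∀ u, Function.Commute Φ fun c v => c (v + u)) (S : Finset (Fin d → ℤ)) :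
    IsThick {n | ∀ p : (Fin d → ℤ) → K, ∃ g, (∀ v ∈ S, g v = 1) ∧ ∀ v ∈ S, Φ^[n] g v = p v} := by
  classical
  intro L
  have : Nonempty (Fin d) := ⟨⟨0, hd⟩⟩
  have : Fintype K := Fintype.ofFinite K
  obtain ⟨T, hwin⟩ : ∃ T : Finset (Fin d → ℤ), ∀ j ≤ L, ∀ v ∈ S,
      DependsOn (fun c => Φ^[j] c v) (T : Set (Fin d → ℤ)) := by
    choose T hT using fun p : ℕ × (Fin d → ℤ) =>
      ((continuous_apply p.2).comp (hc.iterate p.1)).exists_finset_dependsOn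
    refine ⟨(Finset.range (L + 1) ×ˢ S).biUnion T, fun j hj v hv => (hT (j, v)).mono ?_⟩
    exact_mod_cast Finset.subset_biUnion_of_mem T (by simp [hv]; omega)
  let P := Fin (L + 1) × (S → K)
  choose w hw using fun κ : P =>
    (hf.surjective_pi hc).iterate κ.1 fun v => if h : v ∈ S then κ.2 ⟨v, h⟩ else 1
  obtain ⟨D, hD⟩ := exists_translates_injective hd (S ∪ T)
  let pos : P × ↥(S ∪ T) → Fin d → ℤ := fun q => q.2 + D (Fintype.equivFin P q.1)
  have hpos : Injective pos := hD.comp <|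
    (Fin.val_injective.comp (Fintype.equivFin P).injective).prodMap injective_id
  let W := Finset.univ.image pos
  let b := extend pos (fun q => w q.1 q.2) 1
  obtain ⟨r, -, ⟨g₁, hg₁, rfl⟩, hb⟩ := hf (cylinder 1 W) (cylinder b W) (isOpen_cylinder _ _)
    (isOpen_cylinder _ _) ⟨1, fun _ _ => rfl⟩ ⟨b, fun _ _ => rfl⟩
  refine ⟨r, fun j hj p => ?_⟩
  let κ : P := (⟨j, by omega⟩, fun v => p v)
  let u := D (Fintype.equivFin P κ)
  have hW : ∀ y (hy : y ∈ S ∪ T), y + u ∈ W := fun y hy =>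
    Finset.mem_image_of_mem pos (Finset.mem_univ (κ, ⟨y, hy⟩))
  refine ⟨fun v => g₁ (v + u), fun v hv => hg₁ _ (hW v (Finset.mem_union_left _ hv)), ?_⟩
  have horbit : ∀ y ∈ S ∪ T, Φ^[r] (fun v => g₁ (v + u)) y = w κ y := fun y hy => by
    rw [((hsh u).iterate_left r) g₁]
    exact (hb _ (hW y hy)).trans (hpos.extend_apply _ _ (κ, ⟨y, hy⟩))
  intro v hv
  rw [add_comm, iterate_add_apply]
  refine (hwin j hj v hv fun y hy => horbit y (Finset.mem_union_right _ hy)).trans ?_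
  simp [hw κ, hv, κ]

section Verbal

variable {G G' : Type*} [Group G] [Group G'] (w : FreeGroup ℕ)

theorem map_verbalSubgroup_le (f : G →* G') :
    (verbalSubgroup G w).map f ≤ verbalSubgroup G' w := by
  rw [verbalSubgroup, MonoidHom.map_closure]
  exact Subgroup.closure_mono (by rintro _ ⟨_, ⟨φ, rfl⟩, rfl⟩; exact ⟨f.comp φ, rfl⟩)

theorem map_mem_verbalSubgroup (f : G →* G') {x : G} (hx : x ∈ verbalSubgroup G w) :
    f x ∈ verbalSubgroup G' w :=
  map_verbalSubgroup_le w f ⟨x, hx, rfl⟩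

instance verbalSubgroup_characteristic : (verbalSubgroup G w).Characteristic :=
  Subgroup.characteristic_iff_map_le.mpr fun ϕ => map_verbalSubgroup_le w ϕ.toMonoidHom

/-- The product of `u` and `u'` after renaming their variables apart. -/
def FreeGroup.mulApart (u u' : FreeGroup ℕ) : FreeGroup ℕ :=
  FreeGroup.map (Equiv.natSumNatEquivNat ∘ Sum.inl) u *
    FreeGroup.map (Equiv.natSumNatEquivNat ∘ Sum.inr) u'

theorem FreeGroup.mulApart_mem_verbalSubgroup {u u' : FreeGroup ℕ}
    (hu : u ∈ verbalSubgroup (FreeGroup ℕ) w) (hu' : u' ∈ verbalSubgroup (FreeGroup ℕ) w) :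
    u.mulApart u' ∈ verbalSubgroup (FreeGroup ℕ) w :=
  mul_mem (map_mem_verbalSubgroup w _ hu) (map_mem_verbalSubgroup w _ hu')

theorem FreeGroup.exists_apply_mulApart (u u' : FreeGroup ℕ) (φ φ' : FreeGroup ℕ →* G) :
    ∃ ψ : FreeGroup ℕ →* G, ψ (u.mulApart u') = φ u * φ' u' := by
  refine ⟨FreeGroup.lift (Sum.elim (φ ∘ of) (φ' ∘ of) ∘ Equiv.natSumNatEquivNat.symm), ?_⟩
  rw [mulApart, _root_.map_mul, ← MonoidHom.comp_apply, ← MonoidHom.comp_apply (FreeGroup.lift _)]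
  congr 2 <;> exact FreeGroup.ext_hom _ _ fun i => by simp

/-- Since `G` is finite, the values of finitely many words, with their variables renamed apart,
can be multiplied into the values of a single word. -/
theorem exists_word_forall_mem_verbalSubgroup [Finite G] :
    ∃ u ∈ verbalSubgroup (FreeGroup ℕ) w,
      ∀ h ∈ verbalSubgroup G w, ∃ φ : FreeGroup ℕ →* G, φ u = h := by
  classical
  have : Fintype G := Fintype.ofFinite G
  have hvalue : ∀ h ∈ verbalSubgroup G w,
      ∃ u ∈ verbalSubgroup (FreeGroup ℕ) w, ∃ φ : FreeGroup ℕ →* G, φ u = h := by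
    intro h hh
    induction hh using Subgroup.closure_induction with
    | mem _ hx =>
      obtain ⟨φ, rfl⟩ := hx
      exact ⟨w, Subgroup.subset_closure ⟨MonoidHom.id _, rfl⟩, φ, rfl⟩
    | one => exact ⟨1, one_mem _, 1, rfl⟩
    | mul _ _ _ _ ihx ihy =>
      obtain ⟨u, hu, φ, rfl⟩ := ihx
      obtain ⟨u', hu', φ', rfl⟩ := ihy
      obtain ⟨ψ, hψ⟩ := FreeGroup.exists_apply_mulApart u u' φ φ'
      exact ⟨_, FreeGroup.mulApart_mem_verbalSubgroup w hu hu', ψ, hψ⟩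
    | inv _ _ ih =>
      obtain ⟨u, hu, φ, rfl⟩ := ih
      exact ⟨u⁻¹, inv_mem hu, φ, map_inv φ u⟩
  suffices ∀ s : Finset G, (∀ h ∈ s, h ∈ verbalSubgroup G w) →
      ∃ u ∈ verbalSubgroup (FreeGroup ℕ) w, ∀ h ∈ s, ∃ φ : FreeGroup ℕ →* G, φ u = h by
    obtain ⟨u, hu, hs⟩ := this {h | h ∈ verbalSubgroup G w} (by simp)
    exact ⟨u, hu, fun h hh => hs h (by simpa using hh)⟩
  intro s hs
  induction s using Finset.induction_on with
  | empty => exact ⟨1, one_mem _, by simp⟩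
  | insert h s _ ih =>
    obtain ⟨u, hu, hφ⟩ := ih fun x hx => hs x (Finset.mem_insert_of_mem hx)
    obtain ⟨u', hu', φ', rfl⟩ := hvalue h (hs h (Finset.mem_insert_self h s))
    refine ⟨_, FreeGroup.mulApart_mem_verbalSubgroup w hu hu', ?_⟩
    simp only [Finset.mem_insert, forall_eq_or_imp]
    refine ⟨?_, fun x hx => ?_⟩
    · obtain ⟨ψ, hψ⟩ := FreeGroup.exists_apply_mulApart u u' 1 φ'
      exact ⟨ψ, by simp [hψ]⟩
    · obtain ⟨φ, rfl⟩ := hφ x hx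
      obtain ⟨ψ, hψ⟩ := FreeGroup.exists_apply_mulApart u u' φ 1
      exact ⟨ψ, by simp [hψ]⟩

variable {ι : Type*}

theorem mem_verbalSubgroup_pi [Finite G] {c : ι → G} (hc : ∀ v, c v ∈ verbalSubgroup G w) :
    c ∈ verbalSubgroup (ι → G) w := by
  obtain ⟨u, hu, huniv⟩ := exists_word_forall_mem_verbalSubgroup (G := G) w
  choose φ hφ using fun v => huniv (c v) (hc v)
  have hc : MonoidHom.pi φ u = c := funext hφ
  exact hc ▸ map_mem_verbalSubgroup w (MonoidHom.pi φ) hu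

theorem map_apply_mem_verbalSubgroup [Finite G] (F : (ι → G) →* ι → G) {c : ι → G}
    (hc : ∀ v, c v ∈ verbalSubgroup G w) (v : ι) : F c v ∈ verbalSubgroup G w :=
  map_mem_verbalSubgroup w ((Pi.evalMonoidHom _ v).comp F) (mem_verbalSubgroup_pi w hc)

end Verbal

section WordMap

variable {ι G : Type*} [Add ι] [Group G]

def wordMap (u : FreeGroup ℕ) (D : ℕ → ι) (c : ι → G) : ι → G :=
  FreeGroup.lift (fun i v => c (v + D i)) u

theorem continuous_wordMap [TopologicalSpace G] [IsTopologicalGroup G] (u : FreeGroup ℕ)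
    (D : ℕ → ι) : Continuous (wordMap (G := G) u D) := by
  induction u with
  | C1 => exact (continuous_const (y := 1)).congr fun c => by simp [wordMap]
  | of i =>
    exact (continuous_pi fun v => continuous_apply (v + D i)).congr fun c => by simp [wordMap]
  | inv_of _ ih => exact ih.inv.congr fun c => by simp [wordMap]
  | mul _ _ ihx ihy => exact (ihx.mul ihy).congr fun c => by simp [wordMap]

theorem wordMap_mem_verbalSubgroup (w : FreeGroup ℕ) {u : FreeGroup ℕ}
    (hu : u ∈ verbalSubgroup (FreeGroup ℕ) w) (D : ℕ → ι) (c : ι → G) (v : ι) :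
    wordMap u D c v ∈ verbalSubgroup G w :=
  map_mem_verbalSubgroup w ((Pi.evalMonoidHom (fun _ => G) v).comp
    (FreeGroup.lift fun i v => c (v + D i))) hu

theorem map_wordMap (F : (ι → G) →* ι → G) (hsh : ∀ u, Function.Commute F fun c v => c (v + u))
    (u : FreeGroup ℕ) (D : ℕ → ι) (c : ι → G) : F (wordMap u D c) = wordMap u D (F c) := by
  rw [wordMap, ← MonoidHom.comp_apply]
  congr 1
  exact FreeGroup.ext_hom _ _ fun i => by simpa using hsh (D i) c

theorem exists_wordMap_eqOn {w u : FreeGroup ℕ}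
    (hu : ∀ h ∈ verbalSubgroup G w, ∃ φ : FreeGroup ℕ →* G, φ u = h) {S : Finset ι} {D : ℕ → ι}
    (hD : Injective fun p : ℕ × S => (p.2 : ι) + D p.1) {p : ι → G}
    (hp : ∀ v ∈ S, p v ∈ verbalSubgroup G w) : ∃ c, ∀ v ∈ S, wordMap u D c v = p v := by
  choose φ hφ using fun v : S => hu (p v) (hp v v.2)
  refine ⟨extend (fun q : ℕ × S => (q.2 : ι) + D q.1) (fun q => φ q.2 (.of q.1)) 1,
    fun v hv => ?_⟩
  rw [← hφ ⟨v, hv⟩]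
  change ((Pi.evalMonoidHom (fun _ => G) v).comp (FreeGroup.lift _)) u = _
  congr 1
  exact FreeGroup.ext_hom _ _ fun i => by simpa using hD.extend_apply _ _ (i, ⟨v, hv⟩)

end WordMap

/-- Evaluating a word whose values exhaust `verbalSubgroup G w` at far apart shifts of a
configuration gives, for any two cylinders, a continuous map intertwining `F` with `F'` whose
image meets both. -/
theorem TopologicallyTransitive.restrict_verbalSubgroup {d : ℕ} (hd : 0 < d) {G : Type*} [Group G]
    [Finite G] [TopologicalSpace G] [DiscreteTopology G] (w : FreeGroup ℕ)
    {F : ((Fin d → ℤ) → G) →* (Fin d → ℤ) → G} (hT : TopologicallyTransitive F)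
    (hsh : ∀ u, Function.Commute F fun c v => c (v + u))
    {F' : {c : (Fin d → ℤ) → G // ∀ v, c v ∈ verbalSubgroup G w} →
      {c : (Fin d → ℤ) → G // ∀ v, c v ∈ verbalSubgroup G w}}
    (hF' : ∀ c, (F' c : (Fin d → ℤ) → G) = F c) : TopologicallyTransitive F' := by
  intro A B hA hB ⟨a, ha⟩ ⟨b, hb⟩
  obtain ⟨A', hA', rfl⟩ := isOpen_induced_iff.mp hA
  obtain ⟨B', hB', rfl⟩ := isOpen_induced_iff.mp hB
  obtain ⟨SA, hSA⟩ := exists_cylinder_subset hA' ha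
  obtain ⟨SB, hSB⟩ := exists_cylinder_subset hB' hb
  obtain ⟨u, hu, huniv⟩ := exists_word_forall_mem_verbalSubgroup (G := G) w
  obtain ⟨D, hD⟩ := exists_translates_injective hd (SA ∪ SB)
  let Ψ : ((Fin d → ℤ) → G) → {c : (Fin d → ℤ) → G // ∀ v, c v ∈ verbalSubgroup G w} :=
    fun c => ⟨wordMap u D c, wordMap_mem_verbalSubgroup w hu D c⟩
  have hΨ : Semiconj Ψ F F' := fun c => Subtype.ext <| by simp [Ψ, hF', map_wordMap F hsh]
  obtain ⟨ca, hca⟩ := exists_wordMap_eqOn huniv hD fun v _ => a.2 v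
  obtain ⟨cb, hcb⟩ := exists_wordMap_eqOn huniv hD fun v _ => b.2 v
  exact hT.exists_iterate_of_semiconj ((continuous_wordMap u D).subtype_mk _) hΨ hA hB
    ⟨ca, hSA fun v hv => hca v (Finset.mem_union_left _ hv)⟩
    ⟨cb, hSB fun v hv => hcb v (Finset.mem_union_right _ hv)⟩

section Restriction

variable {ι G : Type*} [Group G] {N : Subgroup G} {F : (ι → G) → ι → G}
  (hF : ∀ c, (∀ v, c v ∈ N) → ∀ v, F c v ∈ N)

def restrictAlphabet (c : ι → N) : ι → N :=
  fun v => ⟨F (fun v => c v) v, hF _ (fun v => (c v).2) v⟩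

theorem semiconj_restrictAlphabet :
    Semiconj (fun (c : ι → N) v => (c v : G)) (restrictAlphabet hF) F :=
  fun _ => rfl

theorem commute_restrictAlphabet [Add ι] (hsh : ∀ u, Function.Commute F fun c v => c (v + u))
    (u : ι) : Function.Commute (restrictAlphabet hF) fun c v => c (v + u) :=
  fun c => funext fun v => Subtype.ext (congrFun (hsh u fun v => (c v : G)) v)

variable [TopologicalSpace G]

theorem continuous_restrictAlphabet (hc : Continuous F) : Continuous (restrictAlphabet hF) :=
  continuous_pi fun v => ((continuous_apply v).comp (hc.comp (continuous_pi fun v =>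
    continuous_subtype_val.comp (continuous_apply v)))).subtype_mk _

theorem TopologicallyTransitive.restrictAlphabet
    {F' : {c : ι → G // ∀ v, c v ∈ N} → {c : ι → G // ∀ v, c v ∈ N}}
    (hF' : ∀ c, (F' c : ι → G) = F c) (hT : TopologicallyTransitive F') :
    TopologicallyTransitive (restrictAlphabet hF) := by
  let e : {c : ι → G // ∀ v, c v ∈ N} → ι → N := fun c v => ⟨c.1 v, c.2 v⟩
  have he : Surjective e := fun c => ⟨⟨fun v => c v, fun v => (c v).2⟩, rfl⟩
  refine hT.of_semiconj
    (continuous_pi fun v => ((continuous_apply v).comp continuous_subtype_val).subtype_mk _)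
    he.denseRange fun c => funext fun v => Subtype.ext ?_
  simp [_root_.restrictAlphabet, hF']

end Restriction

section Quotient

variable {ι G : Type*} [Group G] (N : Subgroup G)

def quotientPi (c : ι → G) : ι → G ⧸ N :=
  fun v => c v

variable {N}

theorem quotientPi_surjective : Surjective (quotientPi (ι := ι) N) :=
  QuotientGroup.mk_surjective.comp_left

theorem continuous_quotientPi [TopologicalSpace G] : Continuous (quotientPi (ι := ι) N) :=
  continuous_pi fun v => continuous_quot_mk.comp (continuous_apply v)

theorem quotientPi_out (ξ : ι → G ⧸ N) : quotientPi N (fun v => (ξ v).out) = ξ :=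
  funext fun v => QuotientGroup.out_eq' (ξ v)

theorem exists_quotientPi_eq_of_mem_cylinder {S : Finset ι} {x : ι → G} {ξ : ι → G ⧸ N}
    (hξ : ξ ∈ cylinder (quotientPi N x) S) : ∃ c ∈ cylinder x S, quotientPi N c = ξ := by
  classical
  refine ⟨S.piecewise x fun v => (ξ v).out, fun v hv => S.piecewise_eq_of_mem _ _ hv,
    funext fun v => ?_⟩
  by_cases hv : v ∈ S
  · simp [quotientPi, hv, hξ v hv]
  · simp [quotientPi, hv]

variable {F : (ι → G) →* ι → G}

theorem exists_semiconj_quotientPi (hF : ∀ c, (∀ v, c v ∈ N) → ∀ v, F c v ∈ N) :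
    ∃ Ft, Semiconj (quotientPi N) F Ft := by
  refine ⟨fun ξ => quotientPi N (F fun v => (ξ v).out), fun c => funext fun v => ?_⟩
  set c' : ι → G := fun v => (quotientPi N c v).out
  have hc' : ∀ v, (c⁻¹ * c') v ∈ N := fun v => QuotientGroup.eq.mp (QuotientGroup.out_eq' _).symm
  change quotientPi N (F c) v = quotientPi N (F c') v
  rw [show c' = c * (c⁻¹ * c') by group, map_mul]
  exact (QuotientGroup.mk_mul_of_mem _ (hF _ hc' v)).symm

variable {Ft : (ι → G ⧸ N) → ι → G ⧸ N} (hFt : Semiconj (quotientPi N) F Ft)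
include hFt

theorem continuous_of_semiconj_quotientPi [TopologicalSpace G] [DiscreteTopology G]
    (hc : Continuous F) : Continuous Ft := by
  have : DiscreteTopology (G ⧸ N) := QuotientGroup.discreteTopology (isOpen_discrete _)
  have hFt_eq : Ft = fun ξ => quotientPi N (F fun v => (ξ v).out) :=
    funext fun ξ => by conv_lhs => rw [← quotientPi_out ξ, ← hFt]
  rw [hFt_eq]
  exact continuous_quotientPi.comp <| hc.comp <|
    continuous_pi fun v => continuous_of_discreteTopology.comp (continuous_apply v)

theorem map_mul_of_semiconj_quotientPi [N.Normal] (a b : ι → G ⧸ N) :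
    Ft (a * b) = Ft a * Ft b := by
  obtain ⟨a, rfl⟩ := quotientPi_surjective a
  obtain ⟨b, rfl⟩ := quotientPi_surjective b
  change Ft (quotientPi N (a * b)) = Ft (quotientPi N a) * Ft (quotientPi N b)
  rw [← hFt, ← hFt, ← hFt, map_mul]
  rfl

end Quotient

/-- The hitting times of the quotient are syndetic and those at which the restriction realises
every pattern on `S` from a configuration trivial on `S` are thick. At a common time `n`, lift
the quotient orbit to `c`; the discrepancy between `F^[n] c` and the target lies in `N` on `S`
and is corrected by such a configuration. -/
theorem TopologicallyTransitive.of_restrict_of_quotient {d : ℕ} (hd : 0 < d) {G : Type*}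
    [Group G] [Finite G] [TopologicalSpace G] [DiscreteTopology G] {N : Subgroup G} [N.Normal]
    {F : ((Fin d → ℤ) → G) →* (Fin d → ℤ) → G} (hc : Continuous F)
    (hsh : ∀ u, Function.Commute F fun c v => c (v + u))
    {F' : {c : (Fin d → ℤ) → G // ∀ v, c v ∈ N} → {c : (Fin d → ℤ) → G // ∀ v, c v ∈ N}}
    (hF' : ∀ c, (F' c : (Fin d → ℤ) → G) = F c) (hres : TopologicallyTransitive F')
    {Ft : ((Fin d → ℤ) → G ⧸ N) → (Fin d → ℤ) → G ⧸ N} (hFt : Semiconj (quotientPi N) F Ft)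
    (hquot : TopologicallyTransitive Ft) : TopologicallyTransitive F := by
  intro U V hU hV ⟨x, hx⟩ ⟨y, hy⟩
  obtain ⟨SU, hSU⟩ := exists_cylinder_subset hU hx
  obtain ⟨SV, hSV⟩ := exists_cylinder_subset hV hy
  have : Nonempty (Fin d) := ⟨⟨0, hd⟩⟩
  have : DiscreteTopology (G ⧸ N) := QuotientGroup.discreteTopology (isOpen_discrete _)
  have hN : ∀ c, (∀ v, c v ∈ N) → ∀ v, F c v ∈ N := fun c hc => hF' ⟨c, hc⟩ ▸ (F' ⟨c, hc⟩).2
  obtain ⟨n, ⟨_, ⟨ξ, hξ, rfl⟩, hξn⟩, hn⟩ :=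
    (hquot.isSyndetic_of_map_mul (continuous_of_semiconj_quotientPi hFt hc)
      (map_mul_of_semiconj_quotientPi hFt) (isOpen_cylinder (quotientPi N x) (SU ∪ SV))
      (isOpen_cylinder (quotientPi N y) (SU ∪ SV)) ⟨_, fun _ _ => rfl⟩
      ⟨_, fun _ _ => rfl⟩).inter_nonempty
    ((hres.restrictAlphabet hN hF').isThick hd (continuous_restrictAlphabet hN hc)
      (commute_restrictAlphabet hN hsh) (SU ∪ SV))
  obtain ⟨c, hcx, rfl⟩ := exists_quotientPi_eq_of_mem_cylinder hξ
  have hdefect : ∀ v ∈ SU ∪ SV, (F^[n] c v)⁻¹ * y v ∈ N := fun v hv =>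
    QuotientGroup.eq.mp (((hFt.iterate_right n) c ▸ hξn v hv :))
  obtain ⟨g, hg₁, hgn⟩ := hn fun v => if hv : v ∈ SU ∪ SV then ⟨_, hdefect v hv⟩ else 1
  refine ⟨n, _, ⟨c * fun v => (g v : G), hSU fun v hv => ?_, rfl⟩, hSV fun v hv => ?_⟩
  · simp [hcx v (Finset.mem_union_left _ hv), hg₁ v (Finset.mem_union_left _ hv)]
  · have hv' := Finset.mem_union_right SU hv
    have hgv : F^[n] (fun v => (g v : G)) v = (F^[n] c v)⁻¹ * y v := by
      rw [← congrFun ((semiconj_restrictAlphabet hN).iterate_right n g) v, hgn v hv', dif_pos hv']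
    rw [iterate_map_mul, Pi.mul_apply, hgv, mul_inv_cancel_left]

theorem stmt0 (d : ℕ) (hd : 0 < d) (G : Type*) [Group G] [Finite G]
    [TopologicalSpace G] [DiscreteTopology G]
    (F : ((Fin d → ℤ) → G) → ((Fin d → ℤ) → G))
    (hFcont : Continuous F)
    (hFhom : ∀ a b : (Fin d → ℤ) → G, F (a * b) = F a * F b)
    (hFshift : ∀ (u : Fin d → ℤ) (c : (Fin d → ℤ) → G),
      F (fun v => c (v + u)) = fun v => F c (v + u))
    (w : FreeGroup ℕ) (H : Subgroup G) (hH : H = verbalSubgroup G w) :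
    TopologicallyTransitive F ↔
      ((∀ F' : {c : (Fin d → ℤ) → G // ∀ v, c v ∈ H} →
               {c : (Fin d → ℤ) → G // ∀ v, c v ∈ H},
          (∀ c, (F' c : (Fin d → ℤ) → G) = F (c : (Fin d → ℤ) → G)) →
          TopologicallyTransitive F') ∧
       (∀ Ft : ((Fin d → ℤ) → G ⧸ H) → ((Fin d → ℤ) → G ⧸ H),
          (Ft ∘ (fun c v => (QuotientGroup.mk (c v) : G ⧸ H)) =
            (fun c v => (QuotientGroup.mk (c v) : G ⧸ H)) ∘ F) →
          TopologicallyTransitive Ft)) := by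
  subst hH
  let Φ : ((Fin d → ℤ) → G) →* (Fin d → ℤ) → G := MonoidHom.mk' F hFhom
  have hsh : ∀ u, Function.Commute Φ fun c v => c (v + u) := fun u c => hFshift u c
  have hinv : ∀ c, (∀ v, c v ∈ verbalSubgroup G w) → ∀ v, F c v ∈ verbalSubgroup G w :=
    fun c hc => map_apply_mem_verbalSubgroup w Φ hc
  constructor
  · intro hT
    exact ⟨fun F' hF' => hT.restrict_verbalSubgroup (F := Φ) hd w hsh hF',
      fun Ft hFt => hT.of_semiconj continuous_quotientPi quotientPi_surjective.denseRange
        fun c => (congrFun hFt c).symm⟩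
  · rintro ⟨hres, hquot⟩
    obtain ⟨Ft, hFt⟩ := exists_semiconj_quotientPi (F := Φ) hinv
    exact TopologicallyTransitive.of_restrict_of_quotient hd hFcont hsh
      (F' := fun c => ⟨F c, hinv c c.2⟩) (fun _ => rfl) (hres _ fun _ => rfl) hFt
      (hquot Ft (funext fun c => (hFt c).symm))
end

section
/- Let d be a positive integer, G a finite group, and F a topologically transitive GCA on G^{Z^d}. Let H = [G,G] be the commutator subgroup of G. Then F maps the closed subgroup H^{Z^d} = {c ∈ G^{Z^d} : c_v ∈ [G,G] for all v ∈ Z^d} into itself, and the restriction of F to H^{Z^d} is topologically transitive. -/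
open Function Topology

section Restrict

variable {ι G : Type*}

theorem Finset.restrict_surjective [Nonempty G] (E : Finset ι) :
    Surjective (E.restrict : (ι → G) → (E → G)) := fun y =>
  ⟨extend Subtype.val y fun _ => Classical.ofNonempty,
    funext (Subtype.val_injective.extend_apply y _)⟩

def Finset.restrictMonoidHom [Group G] (E : Finset ι) : (ι → G) →* (E → G) :=
  MonoidHom.pi fun v => Pi.evalMonoidHom (fun _ => G) (v : ι)

theorem exists_finset_forall_eq_imp_mem_of_mem_nhds [TopologicalSpace G] {s : Set (ι → G)}
    {a : ι → G} (hs : s ∈ 𝓝 a) : ∃ E : Finset ι, ∀ c, (∀ i ∈ E, c i = a i) → c ∈ s := by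
  obtain ⟨E, t, ht, hts⟩ := Filter.mem_pi'.mp (nhds_pi (a := a) ▸ hs)
  exact ⟨E, fun c hc => hts fun i hi => hc i hi ▸ mem_of_mem_nhds (ht i)⟩

end Restrict

section Commutator

variable {ι G H : Type*} [Group G] [Group H]

theorem MonoidHom.map_mem_commutator (f : G →* H) {x : G} (hx : x ∈ commutator G) :
    f x ∈ commutator H := by
  have hle : (commutator G).map f ≤ commutator H := by
    rw [commutator_def, Subgroup.map_commutator]
    exact Subgroup.commutator_mono le_top le_top
  exact hle ⟨x, hx, rfl⟩

theorem exists_mem_commutator_apply_eq {f : G →* H} (hf : Surjective f) {y : H}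
    (hy : y ∈ commutator H) : ∃ x ∈ commutator G, f x = y := by
  rwa [← Subgroup.mem_map, commutator_def, Subgroup.map_commutator, ← MonoidHom.range_eq_map,
    MonoidHom.range_eq_top.mpr hf]

theorem pi_mem_commutator_of_finite [Finite ι] {c : ι → G} (hc : ∀ i, c i ∈ commutator G) :
    c ∈ commutator (ι → G) := by
  rw [commutator_def, ← Subgroup.pi_top Set.univ, Subgroup.commutator_pi_pi_of_finite]
  exact fun i _ => hc i

theorem prodMk_mem_commutator {x : G} {y : H} (hx : x ∈ commutator G) (hy : y ∈ commutator H) :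
    (x, y) ∈ commutator (G × H) := by
  rw [commutator_def, ← Subgroup.top_prod_top, Subgroup.commutator_prod_prod]
  exact ⟨hx, hy⟩

theorem MonoidHom.mapsTo_pi_commutator {κ : Type*} [TopologicalSpace G] [TopologicalSpace H]
    [DiscreteTopology H] (Φ : (ι → G) →* (κ → H)) (hΦ : Continuous Φ) :
    Set.MapsTo Φ {c | ∀ i, c i ∈ commutator G} {c | ∀ k, c k ∈ commutator H} := by
  intro c hc k
  obtain ⟨E, hE⟩ := exists_finset_forall_eq_imp_mem_of_mem_nhds <|
    (((continuous_apply k).comp hΦ).isOpen_preimage _ (isOpen_discrete {Φ c k})).mem_nhds rfl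
  obtain ⟨c', hc', hc'E⟩ := exists_mem_commutator_apply_eq
    (f := (E.restrictMonoidHom : (ι → G) →* (E → G))) E.restrict_surjective
    (pi_mem_commutator_of_finite fun i : E => hc i)
  have hΦc' : Φ c' k ∈ commutator H :=
    (Pi.evalMonoidHom _ k).map_mem_commutator (Φ.map_mem_commutator hc')
  have hagree : Φ c' k = Φ c k := hE c' fun i hi => congrFun hc'E ⟨i, hi⟩
  rwa [hagree] at hΦc'

end Commutator

theorem exists_injective_add_translates {A : Type*} [AddGroup A] [Infinite A] (E : Finset A)
    (ι : Type*) [Finite ι] : ∃ t : ι → A, Injective fun q : ι × E => (q.2 : A) + t q.1 := by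
  induction ι using Finite.induction_empty_option with
  | of_equiv e ih =>
    obtain ⟨t, ht⟩ := ih
    refine ⟨t ∘ e.symm, fun q q' h => ?_⟩
    have := @ht (e.symm q.1, q.2) (e.symm q'.1, q'.2) h
    simp only [Prod.mk.injEq, EmbeddingLike.apply_eq_iff_eq] at this
    exact Prod.ext this.1 this.2
  | h_empty => exact ⟨PEmpty.elim, fun q => q.1.elim⟩
  | @h_option ι _ ih =>
    classical
    obtain ⟨t, ht⟩ := ih
    obtain ⟨a, ha⟩ := Infinite.exists_notMem_finset
      (Finset.univ.image fun q : ι × E × E => -(q.2.1 : A) + q.2.2 + t q.1)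
    have hfresh : ∀ (i : ι) (v w : E), (v : A) + a ≠ w + t i := by
      intro i v w h
      refine ha (Finset.mem_image.mpr ⟨(i, v, w), Finset.mem_univ _, ?_⟩)
      rw [add_assoc, ← h, neg_add_cancel_left]
    refine ⟨fun o => o.elim a t, ?_⟩
    rintro ⟨_ | i, v⟩ ⟨_ | i', w⟩ h <;> simp only [Option.elim] at h
    · rw [Subtype.ext (add_right_cancel h)]
    · exact absurd h (hfresh i' v w)
    · exact absurd h.symm (hfresh i w v)
    · simpa using @ht (i, v) (i', w) h

theorem TopologicallyTransitive.exists_surjective_restrict_iterate {A G : Type*} [AddGroup A]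
    [Infinite A] [Finite G] [Nonempty G] [TopologicalSpace G] [DiscreteTopology G]
    {f : (A → G) → (A → G)} (hf : ∀ u : A, Function.Commute f fun c v => c (v + u))
    (htrans : TopologicallyTransitive f) (E : Finset A) :
    ∃ n, Surjective fun x => (E.restrict x, E.restrict (f^[n] x)) := by
  obtain ⟨t, ht⟩ := exists_injective_add_translates E ((E → G) × (E → G))
  -- the pattern of `p` is written on the translate `E + t p`
  let cylinder (P : ((E → G) × (E → G)) × E → G) : Set (A → G) :=
    (fun x q => x ((q.2 : A) + t q.1)) ⁻¹' {P}
  have hopen : ∀ P, IsOpen (cylinder P) := fun P =>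
    (isOpen_discrete {P}).preimage (continuous_pi fun _ => continuous_apply _)
  have hnonempty : ∀ P, (cylinder P).Nonempty := fun P =>
    ⟨extend _ P fun _ => Classical.ofNonempty, extend_comp ht P _⟩
  obtain ⟨n, _, ⟨x, hx, rfl⟩, hy⟩ := htrans _ _ (hopen fun q => q.1.1 q.2)
    (hopen fun q => q.1.2 q.2) (hnonempty _) (hnonempty _)
  refine ⟨n, fun p => ⟨fun v => x (v + t p), Prod.ext (funext fun v => congrFun hx (p, v)) ?_⟩⟩
  change E.restrict (f^[n] fun v => x (v + t p)) = p.2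
  rw [((hf (t p)).iterate_left n).eq]
  exact funext fun v => congrFun hy (p, v)

theorem topologicallyTransitive_subtype_of_forall_finset {ι α : Type*} [TopologicalSpace α]
    {p : (ι → α) → Prop} {f : (ι → α) → (ι → α)} {f' : {c // p c} → {c // p c}}
    (hf' : ∀ c, (f' c : ι → α) = f c)
    (h : ∀ (E : Finset ι) (a b : {c // p c}), ∃ n, ∃ c : {c // p c},
      E.restrict c.1 = E.restrict a.1 ∧ E.restrict (f^[n] c.1) = E.restrict b.1) :
    TopologicallyTransitive f' := by
  classical
  rintro U V hU hV ⟨a, ha⟩ ⟨b, hb⟩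
  obtain ⟨U', hU', rfl⟩ := isOpen_induced_iff.mp hU
  obtain ⟨V', hV', rfl⟩ := isOpen_induced_iff.mp hV
  obtain ⟨E₁, hE₁⟩ := exists_finset_forall_eq_imp_mem_of_mem_nhds (hU'.mem_nhds ha)
  obtain ⟨E₂, hE₂⟩ := exists_finset_forall_eq_imp_mem_of_mem_nhds (hV'.mem_nhds hb)
  obtain ⟨n, c, hca, hcb⟩ := h (E₁ ∪ E₂) a b
  have hval : Semiconj Subtype.val f' f := hf'
  refine ⟨n, f'^[n] c, ⟨c, hE₁ _ fun i hi => ?_, rfl⟩, hE₂ _ fun i hi => ?_⟩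
  · exact congrFun hca ⟨i, Finset.mem_union_left _ hi⟩
  · rw [(hval.iterate_right n).eq]
    exact congrFun hcb ⟨i, Finset.mem_union_right _ hi⟩

theorem stmt1 (d : ℕ) (hd : 0 < d) (G : Type*) [Group G] [Finite G]
    [TopologicalSpace G] [DiscreteTopology G]
    (F : ((Fin d → ℤ) → G) → ((Fin d → ℤ) → G))
    (hFcont : Continuous F)
    (hFhom : ∀ a b : (Fin d → ℤ) → G, F (a * b) = F a * F b)
    (hFshift : ∀ (u : Fin d → ℤ) (c : (Fin d → ℤ) → G),
      F (fun v => c (v + u)) = fun v => F c (v + u))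
    (hFtrans : TopologicallyTransitive F) :
    Set.MapsTo F {c | ∀ v, c v ∈ commutator G} {c | ∀ v, c v ∈ commutator G} ∧
    ∀ F' : {c : (Fin d → ℤ) → G // ∀ v, c v ∈ commutator G} →
           {c : (Fin d → ℤ) → G // ∀ v, c v ∈ commutator G},
      (∀ c, (F' c : (Fin d → ℤ) → G) = F (c : (Fin d → ℤ) → G)) →
      TopologicallyTransitive F' := by
  have : Infinite (Fin d → ℤ) := Pi.infinite_of_exists_right ⟨0, hd⟩
  let Φ : Monoid.End ((Fin d → ℤ) → G) := MonoidHom.mk' F hFhom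
  refine ⟨Φ.mapsTo_pi_commutator hFcont, fun F' hF' => ?_⟩
  refine topologicallyTransitive_subtype_of_forall_finset hF' fun E a b => ?_
  obtain ⟨n, hn⟩ := hFtrans.exists_surjective_restrict_iterate hFshift E
  let Ψ := E.restrictMonoidHom.prod (E.restrictMonoidHom.comp (Φ ^ n))
  obtain ⟨c, hc, hcab⟩ := exists_mem_commutator_apply_eq (f := Ψ) hn
    (prodMk_mem_commutator (pi_mem_commutator_of_finite fun v => a.2 v)
      (pi_mem_commutator_of_finite fun v => b.2 v))
  exact ⟨n, ⟨c, fun v => (Pi.evalMonoidHom _ v).map_mem_commutator hc⟩,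
    congrArg Prod.fst hcab, congrArg Prod.snd hcab⟩
end

section
/- Let d be a positive integer, G a finite group, and F a topologically transitive GCA on G^{Z^d}. Then for every finite subset K of Z^d there exists an integer n ≥ 0 such that for all patterns P, Q : K → G there is a configuration c ∈ G^{Z^d} with c_v = P(v) for all v ∈ K and (F^n(c))_v = Q(v) for all v ∈ K; that is, once the support of the cylinders is fixed, a single number n of iterations suffices to carry any cylinder on that support into any other. -/
theorem stmt3 (d : ℕ) (hd : 0 < d) (G : Type*) [Group G] [Finite G]
    [TopologicalSpace G] [DiscreteTopology G]
    (F : ((Fin d → ℤ) → G) → ((Fin d → ℤ) → G))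
    (hFcont : Continuous F)
    (hFhom : ∀ a b : (Fin d → ℤ) → G, F (a * b) = F a * F b)
    (hFshift : ∀ (u : Fin d → ℤ) (c : (Fin d → ℤ) → G),
      F (fun v => c (v + u)) = fun v => F c (v + u))
    (hFtrans : TopologicallyTransitive F) :
    ∀ K : Finset (Fin d → ℤ), ∃ n : ℕ,
      ∀ P Q : (Fin d → ℤ) → G, ∃ c : (Fin d → ℤ) → G,
        (∀ v ∈ K, c v = P v) ∧ (∀ v ∈ K, F^[n] c v = Q v) := by
  intro K
  classical
  have _inst : Fintype G := Fintype.ofFinite G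
  -- iterates are homomorphisms
  have iterHom : ∀ n (a b : (Fin d → ℤ) → G), F^[n] (a * b) = F^[n] a * F^[n] b := by
    intro n
    induction n with
    | zero => intro a b; simp
    | succ k ih =>
      intro a b
      rw [Function.iterate_succ_apply, Function.iterate_succ_apply,
        Function.iterate_succ_apply, hFhom, ih]
  -- iterates commute with shifts
  have iterShift : ∀ n (u : Fin d → ℤ) (c : (Fin d → ℤ) → G),
      F^[n] (fun v => c (v + u)) = fun v => F^[n] c (v + u) := by
    intro n
    induction n with
    | zero => intro u c; simp
    | succ k ih =>
      intro u c
      rw [Function.iterate_succ_apply, Function.iterate_succ_apply, hFshift, ih]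
  have hd' : 0 < d := hd
  set j0 : Fin d := ⟨0, hd'⟩ with hj0
  obtain ⟨B, hBle⟩ : ∃ B : ℕ, ∀ v ∈ K, (v j0).natAbs ≤ B :=
    ⟨K.sup (fun v => (v j0).natAbs), fun v hv => Finset.le_sup (f := fun v => (v j0).natAbs) hv⟩
  obtain ⟨N, hN⟩ : ∃ N : ℤ, N = 2 * (B : ℤ) + 1 := ⟨_, rfl⟩
  -- key arithmetic fact for disjointness of translates
  have key : ∀ (i i' : ℕ) (x y : ℤ), x.natAbs ≤ B → y.natAbs ≤ B →
      x + (i : ℤ) * N = y + (i' : ℤ) * N → i = i' := by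
    intro i i' x y hx hy h
    have hx1 : x ≤ (B : ℤ) := by omega
    have hx2 : -(B : ℤ) ≤ x := by omega
    have hy1 : y ≤ (B : ℤ) := by omega
    have hy2 : -(B : ℤ) ≤ y := by omega
    by_contra hne
    rcases Nat.lt_or_ge i i' with hlt | hge
    · have ht : (1 : ℤ) ≤ (i' : ℤ) - i := by omega
      have h2 : N ≤ ((i' : ℤ) - i) * N := le_mul_of_one_le_left (by omega) ht
      have h3 : ((i' : ℤ) - i) * N = (i' : ℤ) * N - (i : ℤ) * N := by ring
      linarith
    · have hlt : i' < i := by omega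
      have ht : (1 : ℤ) ≤ (i : ℤ) - i' := by omega
      have h2 : N ≤ ((i : ℤ) - i') * N := le_mul_of_one_le_left (by omega) ht
      have h3 : ((i : ℤ) - i') * N = (i : ℤ) * N - (i' : ℤ) * N := by ring
      linarith
  set m : ℕ := Fintype.card (↥K → G) with hm
  let e : Fin m ≃ (↥K → G) := (Fintype.equivFin (↥K → G)).symm
  let u : Fin m → (Fin d → ℤ) := fun i => fun j => if j = j0 then (i : ℤ) * N else 0
  have hinj : ∀ (i i' : Fin m) (p p' : ↥K),
      (p : Fin d → ℤ) + u i = (p' : Fin d → ℤ) + u i' → i = i' ∧ p = p' := by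
    intro i i' p p' h
    have h0 := congrFun h j0
    simp only [Pi.add_apply, u, if_pos rfl] at h0
    have hii : (i : ℕ) = (i' : ℕ) :=
      key i i' ((p : Fin d → ℤ) j0) ((p' : Fin d → ℤ) j0) (hBle _ p.2) (hBle _ p'.2) h0
    have hii' : i = i' := Fin.ext hii
    subst hii'
    refine ⟨rfl, ?_⟩
    have : (p : Fin d → ℤ) = (p' : Fin d → ℤ) := by
      have := add_right_cancel h
      exact this
    exact Subtype.ext this
  -- the open sets
  let U : Set ((Fin d → ℤ) → G) := {c | ∀ (i : Fin m) (p : ↥K), c ((p : Fin d → ℤ) + u i) = 1}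
  let V : Set ((Fin d → ℤ) → G) := {c | ∀ (i : Fin m) (p : ↥K), c ((p : Fin d → ℤ) + u i) = e i p}
  have hUeq : U = ⋂ (i : Fin m), ⋂ (p : ↥K), {c | c ((p : Fin d → ℤ) + u i) = 1} := by
    ext c; simp [U, Set.mem_iInter]
  have hVeq : V = ⋂ (i : Fin m), ⋂ (p : ↥K), {c | c ((p : Fin d → ℤ) + u i) = e i p} := by
    ext c; simp [V, Set.mem_iInter]
  have hopen : ∀ (w : Fin d → ℤ) (g : G), IsOpen {c : (Fin d → ℤ) → G | c w = g} := by
    intro w g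
    have : {c : (Fin d → ℤ) → G | c w = g} = (fun c : (Fin d → ℤ) → G => c w) ⁻¹' {g} := rfl
    rw [this]
    exact (isOpen_discrete ({g} : Set G)).preimage (continuous_apply w)
  have hUopen : IsOpen U := by
    rw [hUeq]
    exact isOpen_iInter_of_finite fun i => isOpen_iInter_of_finite fun p => hopen _ _
  have hVopen : IsOpen V := by
    rw [hVeq]
    exact isOpen_iInter_of_finite fun i => isOpen_iInter_of_finite fun p => hopen _ _
  have hUne : U.Nonempty := ⟨fun _ => 1, fun i p => rfl⟩
  have hVne : V.Nonempty := by
    refine ⟨fun w => if h : ∃ q : Fin m × ↥K, (q.2 : Fin d → ℤ) + u q.1 = w then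
      e h.choose.1 h.choose.2 else 1, fun i p => ?_⟩
    have hex : ∃ q : Fin m × ↥K, (q.2 : Fin d → ℤ) + u q.1 = (p : Fin d → ℤ) + u i :=
      ⟨(i, p), rfl⟩
    simp only [dif_pos hex]
    obtain ⟨h1, h2⟩ := hinj hex.choose.1 i hex.choose.2 p hex.choose_spec
    rw [h1, h2]
  obtain ⟨n, x, hxU, hxV⟩ := hFtrans U V hUopen hVopen hUne hVne
  obtain ⟨a, haU, rfl⟩ := hxU
  refine ⟨n, fun P Q => ?_⟩
  let R : ↥K → G := fun p => (F^[n] P (p : Fin d → ℤ))⁻¹ * Q (p : Fin d → ℤ)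
  let i : Fin m := e.symm R
  let h : (Fin d → ℤ) → G := fun w => a (w + u i)
  have hsh : F^[n] h = fun v => F^[n] a (v + u i) := iterShift n (u i) a
  refine ⟨P * h, fun v hv => ?_, fun v hv => ?_⟩
  · have h1 : h v = 1 := haU i ⟨v, hv⟩
    simp [Pi.mul_apply, h1]
  · have h2 : F^[n] (P * h) = F^[n] P * F^[n] h := iterHom n P h
    have h3 : F^[n] h v = e i ⟨v, hv⟩ := by
      rw [hsh]; exact hxV i ⟨v, hv⟩
    have h4 : e i = R := e.apply_symm_apply R
    rw [h2, Pi.mul_apply, h3, h4]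
    simp [R]
end

section
/- Let d be a positive integer, G a finite group, and H a fully invariant subgroup of G (i.e. phi(H) ≤ H for every group homomorphism phi : G → G). Then every GCA F on G^{Z^d} maps the closed subgroup H^{Z^d} = {c ∈ G^{Z^d} : c_v ∈ H for all v ∈ Z^d} into itself. -/
theorem stmt4 (d : ℕ) (hd : 0 < d) (G : Type*) [Group G] [Finite G]
    [TopologicalSpace G] [DiscreteTopology G]
    (H : Subgroup G)
    (hHfi : ∀ (φ : G →* G), ∀ x ∈ H, φ x ∈ H)
    (F : ((Fin d → ℤ) → G) → ((Fin d → ℤ) → G))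
    (hFcont : Continuous F)
    (hFhom : ∀ a b : (Fin d → ℤ) → G, F (a * b) = F a * F b)
    (hFshift : ∀ (u : Fin d → ℤ) (c : (Fin d → ℤ) → G),
      F (fun v => c (v + u)) = fun v => F c (v + u)) :
    Set.MapsTo F {c | ∀ v, c v ∈ H} {c | ∀ v, c v ∈ H} := by
  intro c hc
  intro w
  -- F maps 1 to 1
  have hF1 : F 1 = 1 := by
    have h := hFhom 1 1
    rw [mul_one] at h
    have h2 : F 1 * F 1 = F 1 * 1 := by rw [← h, mul_one]
    exact mul_left_cancel h2
  -- the evaluation-at-w monoid hom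
  set Φ : ((Fin d → ℤ) → G) →* G :=
    { toFun := fun x => F x w
      map_one' := by show F 1 w = 1; rw [hF1]; rfl
      map_mul' := fun a b => by show F (a * b) w = F a w * F b w; rw [hFhom]; rfl } with hΦ
  -- preimage of {1} under Φ is open
  have hUopen : IsOpen ((fun x => F x w) ⁻¹' {1}) :=
    ((continuous_apply w).comp hFcont).isOpen_preimage _ (isOpen_discrete _)
  have h1U : (1 : (Fin d → ℤ) → G) ∈ (fun x => F x w) ⁻¹' {1} := by
    show F 1 w ∈ ({1} : Set G)
    rw [hF1]; rfl
  obtain ⟨I, u, hu, hsub⟩ := isOpen_pi_iff.mp hUopen 1 h1U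
  -- decompose c
  set c' : (Fin d → ℤ) → G := fun v => if v ∈ I then c v else 1 with hc'
  set r : (Fin d → ℤ) → G := fun v => if v ∈ I then 1 else c v with hr
  have hdec : c = c' * r := by
    funext v
    by_cases hv : v ∈ I <;> simp [hc', hr, hv]
  have hrU : F r w = 1 := by
    have hmem : r ∈ (I : Set (Fin d → ℤ)).pi u := by
      intro i hi
      have hi' : i ∈ I := hi
      have h1 : r i = 1 := by simp [hr, hi']
      rw [h1]
      exact (hu i hi').2
    exact hsub hmem
  -- the finite part lands in H
  have key : ∀ (J : Finset (Fin d → ℤ)),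
      F (fun v => if v ∈ J then c v else 1) w ∈ H := by
    intro J
    induction J using Finset.induction_on with
    | empty =>
      have : (fun v : Fin d → ℤ => if v ∈ (∅ : Finset (Fin d → ℤ)) then c v else 1)
          = (1 : (Fin d → ℤ) → G) := by
        funext v; simp
      rw [this, hF1]
      exact H.one_mem
    | @insert a s ha ih =>
      have hsplit : (fun v : Fin d → ℤ => if v ∈ insert a s then c v else 1)
          = Pi.mulSingle a (c a) * (fun v => if v ∈ s then c v else 1) := by
        funext v
        by_cases hv : v = a
        · subst hv
          simp [Pi.mulSingle_apply, ha]
        · simp [Pi.mulSingle_apply, hv, Finset.mem_insert]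
      rw [hsplit, hFhom]
      have h1 : F (Pi.mulSingle a (c a)) w ∈ H :=
        hHfi (Φ.comp (MonoidHom.mulSingle (fun _ : Fin d → ℤ => G) a)) (c a) (hc a)
      exact H.mul_mem h1 ih
  show F c w ∈ H
  have hmul : F c w = F c' w * F r w := by rw [hdec, hFhom]; rfl
  rw [hmul, hrU, mul_one]
  exact key I
end

section
/- Let d be a positive integer and let G₁, G₂ be finite groups. If F₁ is a topologically transitive GCA on G₁^{Z^d} and F₂ is a topologically transitive GCA on G₂^{Z^d}, then the product map F₁ × F₂ : G₁^{Z^d} × G₂^{Z^d} → G₁^{Z^d} × G₂^{Z^d}, (c₁, c₂) ↦ (F₁(c₁), F₂(c₂)), is topologically transitive on the product space with the product topology. -/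
open Filter Function

def TopologicallyMixing {X : Type*} [TopologicalSpace X] (T : X → X) : Prop :=
  ∀ U V : Set X, IsOpen U → IsOpen V → U.Nonempty → V.Nonempty →
    ∀ᶠ n in atTop, (T^[n] '' U ∩ V).Nonempty

section Dynamics

variable {X Y : Type*} [TopologicalSpace X] [TopologicalSpace Y]

theorem TopologicallyMixing.topologicallyTransitive {T : X → X} (h : TopologicallyMixing T) :
    TopologicallyTransitive T :=
  fun U V hU hV hU₀ hV₀ => (h U V hU hV hU₀ hV₀).exists

theorem TopologicallyMixing.prodMap {f : X → X} {g : Y → Y} (hf : TopologicallyMixing f)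
    (hg : TopologicallyMixing g) : TopologicallyMixing (Prod.map f g) := by
  rintro U V hU hV ⟨u, hu⟩ ⟨v, hv⟩
  obtain ⟨U₁, U₂, hU₁, hU₂, hu₁, hu₂, hU⟩ := isOpen_prod_iff.mp hU u.1 u.2 hu
  obtain ⟨V₁, V₂, hV₁, hV₂, hv₁, hv₂, hV⟩ := isOpen_prod_iff.mp hV v.1 v.2 hv
  filter_upwards [hf U₁ V₁ hU₁ hV₁ ⟨_, hu₁⟩ ⟨_, hv₁⟩, hg U₂ V₂ hU₂ hV₂ ⟨_, hu₂⟩ ⟨_, hv₂⟩]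
    with n ⟨x, hx, hxV⟩ ⟨y, hy, hyV⟩
  refine ⟨(x, y), ?_, hV ⟨hxV, hyV⟩⟩
  rw [Prod.map_iterate]
  exact Set.image_mono hU (Set.prod_image_image_eq ▸ ⟨hx, hy⟩)

theorem TopologicallyTransitive.denseRange_s6 [T2Space X] {T : X → X}
    (h : TopologicallyTransitive T) : DenseRange T := by
  refine dense_iff_inter_open.mpr fun V hV ⟨y, hy⟩ => ?_
  by_contra hVT
  have hTy : T y ≠ y := fun h' => hVT ⟨y, hy, y, h'⟩
  obtain ⟨U, W, hU, hW, hyU, hyW, hUW⟩ := t2_separation hTy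
  obtain ⟨n, _, ⟨x, hxU, rfl⟩, hxW, hxV⟩ := h U (W ∩ V) hU (hW.inter hV) ⟨_, hyU⟩ ⟨y, hyW, hy⟩
  cases n with
  | zero => exact hUW.ne_of_mem hxU hxW rfl
  | succ n => exact hVT ⟨_, hxV, _, (iterate_succ_apply' T n x).symm⟩

theorem TopologicallyTransitive.surjective_s6 [T2Space X] [CompactSpace X] {T : X → X}
    (h : TopologicallyTransitive T) (hT : Continuous T) : Surjective T := by
  rw [← Set.range_eq_univ, ← (isCompact_range hT).isClosed.closure_eq]
  exact h.denseRange_s6.closure_range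

end Dynamics

namespace Monoid.End

-- `π` plays the role of reading a configuration on a finite window.
variable {K P : Type*} [Group K] [Group P] (F : Monoid.End K) (π : K →* P)

def windowPairs (n : ℕ) : Subgroup (P × P) := (π.prod (π.comp (F ^ n))).range

def windowsKilled (n : ℕ) : Subgroup P := (windowPairs F π n).comap (MonoidHom.inl P P)

theorem mem_windowsKilled {n : ℕ} {a : P} :
    a ∈ windowsKilled F π n ↔ ∃ x, π x = a ∧ π (F^[n] x) = 1 := by
  simp only [windowsKilled, windowPairs, Subgroup.mem_comap, MonoidHom.inl_apply,
    MonoidHom.mem_range, MonoidHom.prod_apply, Prod.ext_iff]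
  rfl

theorem exists_windows_eq_of_range_le (hF : Surjective F) {n : ℕ}
    (h : π.range ≤ windowsKilled F π n) (x₀ y₀ : K) :
    ∃ x, π x = π x₀ ∧ π (F^[n] x) = π y₀ := by
  obtain ⟨w, rfl⟩ := hF.iterate n y₀
  obtain ⟨k, hk, hkF⟩ := (mem_windowsKilled F π).mp (h ⟨x₀ * w⁻¹, rfl⟩)
  exact ⟨k * w, by simp [hk], by simp [hkF]⟩

theorem pair_mem_windowPairs (n : ℕ) (y : K) : (π y, π (F^[n] y)) ∈ windowPairs F π n :=
  ⟨y, rfl⟩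

theorem mapsTo_windowsKilled {n p : ℕ} (h : windowPairs F π n = windowPairs F π (n + p)) :
    Set.MapsTo F^[p] (π ⁻¹' windowsKilled F π n) (π ⁻¹' windowsKilled F π n) := by
  intro x hx
  have hpairs : (π (F^[p] x), π (F^[n + p] x)) ∈ windowPairs F π n := by
    simpa only [iterate_add_apply] using pair_mem_windowPairs F π n (F^[p] x)
  have hcoset : π (F^[p] x) * (π x)⁻¹ ∈ windowsKilled F π n := by
    have := mul_mem hpairs (inv_mem (h ▸ pair_mem_windowPairs F π (n + p) x))
    simpa [windowsKilled] using this
  simpa using mul_mem hcoset hx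

theorem range_le_windowsKilled [TopologicalSpace K] [TopologicalSpace P] [DiscreteTopology P]
    (hT : TopologicallyTransitive F) (hFc : Continuous F) (hπ : Continuous π) {n p : ℕ}
    (hp : 0 < p) (h : windowPairs F π n = windowPairs F π (n + p)) :
    π.range ≤ windowsKilled F π n := by
  rintro _ ⟨y, rfl⟩
  by_contra hy
  set R := π ⁻¹' windowsKilled F π n
  set U := ⋂ j ∈ Finset.range p, F^[j] ⁻¹' R
  have hU : IsOpen U := isOpen_biInter_finset fun j _ =>
    (hFc.iterate j).isOpen_preimage _ (hπ.isOpen_preimage _ (isOpen_discrete _))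
  have h1U : 1 ∈ U := by simp [U, R, one_mem]
  obtain ⟨m, _, ⟨x, hxU, rfl⟩, hxy⟩ := hT U (π ⁻¹' {π y}) hU
    (hπ.isOpen_preimage _ (isOpen_discrete _)) ⟨1, h1U⟩ ⟨y, rfl⟩
  have hxR : F^[m] x ∈ R := by
    rw [← Nat.div_add_mod m p, iterate_add_apply, iterate_mul]
    exact (mapsTo_windowsKilled F π h).iterate _
      (Set.mem_iInter₂.mp hxU _ (Finset.mem_range.mpr (Nat.mod_lt m hp)))
  exact hy (hxy ▸ hxR)

theorem eventually_exists_windows_eq [TopologicalSpace K] [TopologicalSpace P]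
    [DiscreteTopology P] [Finite P] (hT : TopologicallyTransitive F) (hFc : Continuous F)
    (hFs : Surjective F) (hπ : Continuous π) :
    ∀ᶠ n in atTop, ∀ x₀ y₀ : K, ∃ x, π x = π x₀ ∧ π (F^[n] x) = π y₀ := by
  suffices ∀ᶠ n in atTop, π.range ≤ windowsKilled F π n from
    this.mono fun n hn => exists_windows_eq_of_range_le F π hFs hn
  by_contra hbad
  -- pigeonhole over the finitely many subgroups of `P × P`
  obtain ⟨n, hn, m, -, hnm, hpairs⟩ :=
    (Nat.frequently_atTop_iff_infinite.mp (not_eventually.mp hbad)).exists_lt_map_eq_of_mapsTo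
      (Set.mapsTo_univ (windowPairs F π) _) Set.finite_univ
  refine hn (range_le_windowsKilled F π hT hFc hπ (Nat.sub_pos_of_lt hnm) ?_)
  rwa [Nat.add_sub_cancel' hnm.le]

end Monoid.End

theorem exists_finset_forall_eq_subset {I G : Type*} [TopologicalSpace G] [DiscreteTopology G]
    {U : Set (I → G)} (hU : IsOpen U) {u : I → G} (hu : u ∈ U) :
    ∃ A : Finset I, {x | ∀ i ∈ A, x i = u i} ⊆ U := by
  obtain ⟨A, s, hs, hsU⟩ := isOpen_pi_iff.mp hU u hu
  exact ⟨A, fun x hx => hsU fun i hi => (hx i hi) ▸ (hs i hi).2⟩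

theorem Monoid.End.topologicallyMixing_of_topologicallyTransitive {I G : Type*} [Group G]
    [Finite G] [TopologicalSpace G] [DiscreteTopology G] (F : Monoid.End (I → G))
    (hFc : Continuous F) (hT : TopologicallyTransitive F) : TopologicallyMixing F := by
  classical
  rintro U V hU hV ⟨u, hu⟩ ⟨v, hv⟩
  obtain ⟨A, hA⟩ := exists_finset_forall_eq_subset hU hu
  obtain ⟨B, hB⟩ := exists_finset_forall_eq_subset hV hv
  let π : (I → G) →* (↥(A ∪ B) → G) := MonoidHom.pi fun i => Pi.evalMonoidHom _ i.1
  have hπ : Continuous π := continuous_pi fun i => continuous_apply _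
  filter_upwards [eventually_exists_windows_eq F π hT hFc (hT.surjective_s6 hFc) hπ] with n hn
  obtain ⟨x, hxu, hxv⟩ := hn u v
  exact ⟨F^[n] x, ⟨x, hA fun i hi => congrFun hxu ⟨i, Finset.mem_union_left _ hi⟩, rfl⟩,
    hB fun i hi => congrFun hxv ⟨i, Finset.mem_union_right _ hi⟩⟩

theorem stmt6_general (d : ℕ)
    (G₁ : Type*) [Group G₁] [Finite G₁] [TopologicalSpace G₁] [DiscreteTopology G₁]
    (G₂ : Type*) [Group G₂] [Finite G₂] [TopologicalSpace G₂] [DiscreteTopology G₂]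
    (F₁ : ((Fin d → ℤ) → G₁) → ((Fin d → ℤ) → G₁))
    (hF₁cont : Continuous F₁)
    (hF₁hom : ∀ a b : (Fin d → ℤ) → G₁, F₁ (a * b) = F₁ a * F₁ b)
    (hF₁trans : TopologicallyTransitive F₁)
    (F₂ : ((Fin d → ℤ) → G₂) → ((Fin d → ℤ) → G₂))
    (hF₂cont : Continuous F₂)
    (hF₂hom : ∀ a b : (Fin d → ℤ) → G₂, F₂ (a * b) = F₂ a * F₂ b)
    (hF₂trans : TopologicallyTransitive F₂) :
    TopologicallyTransitive (fun p : ((Fin d → ℤ) → G₁) × ((Fin d → ℤ) → G₂) =>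
      (F₁ p.1, F₂ p.2)) := by
  have mixing₁ := Monoid.End.topologicallyMixing_of_topologicallyTransitive
    (MonoidHom.mk' F₁ hF₁hom) hF₁cont hF₁trans
  have mixing₂ := Monoid.End.topologicallyMixing_of_topologicallyTransitive
    (MonoidHom.mk' F₂ hF₂hom) hF₂cont hF₂trans
  exact (mixing₁.prodMap mixing₂).topologicallyTransitive

theorem stmt6 (d : ℕ) (hd : 0 < d)
    (G₁ : Type*) [Group G₁] [Finite G₁] [TopologicalSpace G₁] [DiscreteTopology G₁]
    (G₂ : Type*) [Group G₂] [Finite G₂] [TopologicalSpace G₂] [DiscreteTopology G₂]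
    (F₁ : ((Fin d → ℤ) → G₁) → ((Fin d → ℤ) → G₁))
    (hF₁cont : Continuous F₁)
    (hF₁hom : ∀ a b : (Fin d → ℤ) → G₁, F₁ (a * b) = F₁ a * F₁ b)
    (hF₁shift : ∀ (u : Fin d → ℤ) (c : (Fin d → ℤ) → G₁),
      F₁ (fun v => c (v + u)) = fun v => F₁ c (v + u))
    (hF₁trans : TopologicallyTransitive F₁)
    (F₂ : ((Fin d → ℤ) → G₂) → ((Fin d → ℤ) → G₂))
    (hF₂cont : Continuous F₂)
    (hF₂hom : ∀ a b : (Fin d → ℤ) → G₂, F₂ (a * b) = F₂ a * F₂ b)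
    (hF₂shift : ∀ (u : Fin d → ℤ) (c : (Fin d → ℤ) → G₂),
      F₂ (fun v => c (v + u)) = fun v => F₂ c (v + u))
    (hF₂trans : TopologicallyTransitive F₂) :
    TopologicallyTransitive (fun p : ((Fin d → ℤ) → G₁) × ((Fin d → ℤ) → G₂) =>
      (F₁ p.1, F₂ p.2)) :=
  stmt6_general d G₁ G₂ F₁ hF₁cont hF₁hom hF₁trans F₂ hF₂cont hF₂hom hF₂trans
end

section
/- Let d be a positive integer, G a finite group, and F a topologically transitive GCA on G^{Z^d}. Then F is topologically weakly mixing: the map F × F : G^{Z^d} × G^{Z^d} → G^{Z^d} × G^{Z^d}, (c₁, c₂) ↦ (F(c₁), F(c₂)), is topologically transitive on the product space with the product topology. -/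
/-- Every point of an open set in a product of discrete spaces has a cylinder
neighborhood contained in the set. -/
lemma cyl_subset {ι : Type*} {G : Type*} [TopologicalSpace G] [DiscreteTopology G]
    {U : Set (ι → G)} (hU : IsOpen U) {a : ι → G} (ha : a ∈ U) :
    ∃ S : Finset ι, ∀ z : ι → G, (∀ v ∈ S, z v = a v) → z ∈ U := by
  obtain ⟨I, u, h1, h2⟩ := isOpen_pi_iff.mp hU a ha
  refine ⟨I, fun z hz => h2 ?_⟩
  intro v hv
  rw [hz v hv]
  exact (h1 v hv).2

lemma iter_shift {d : ℕ} {G : Type*}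
    (F : ((Fin d → ℤ) → G) → ((Fin d → ℤ) → G))
    (hFshift : ∀ (u : Fin d → ℤ) (c : (Fin d → ℤ) → G),
      F (fun v => c (v + u)) = fun v => F c (v + u))
    (n : ℕ) (w : Fin d → ℤ) (c : (Fin d → ℤ) → G) :
    F^[n] (fun v => c (v + w)) = fun v => F^[n] c (v + w) := by
  induction n generalizing c with
  | zero => rfl
  | succ n ih =>
    rw [Function.iterate_succ_apply, Function.iterate_succ_apply,
      hFshift w c, ih (F c)]

lemma prod_iter {X : Type*} (F : X → X) (n : ℕ) (a b : X) :
    (fun p : X × X => (F p.1, F p.2))^[n] (a, b) = (F^[n] a, F^[n] b) := by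
  induction n generalizing a b with
  | zero => rfl
  | succ n ih =>
    rw [Function.iterate_succ_apply, Function.iterate_succ_apply,
      Function.iterate_succ_apply, ih (F a) (F b)]

lemma separation {d : ℕ} (hd : 0 < d) (S : Finset (Fin d → ℤ)) :
    ∃ w : Fin d → ℤ, ∀ v ∈ S, v + w ∉ S := by
  classical
  obtain ⟨i0, B, hB⟩ : ∃ (i0 : Fin d) (B : ℕ), B = S.sup (fun v => (v i0).natAbs) :=
    ⟨⟨0, hd⟩, _, rfl⟩
  refine ⟨(fun _ => 2 * (B : ℤ) + 1), fun v hv hvw => ?_⟩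
  have h1 : (v i0).natAbs ≤ B := hB ▸ Finset.le_sup (f := fun v => (v i0).natAbs) hv
  have h2 : (v i0 + (2 * (B : ℤ) + 1)).natAbs ≤ B := by
    have h := Finset.le_sup (f := fun v => (v i0).natAbs) hvw
    rw [← hB] at h
    simpa using h
  generalize hx : v i0 = x at h1 h2
  clear hB hvw hv
  omega

theorem stmt7 (d : ℕ) (hd : 0 < d) (G : Type*) [Group G] [Finite G]
    [TopologicalSpace G] [DiscreteTopology G]
    (F : ((Fin d → ℤ) → G) → ((Fin d → ℤ) → G))
    (hFcont : Continuous F)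
    (hFhom : ∀ a b : (Fin d → ℤ) → G, F (a * b) = F a * F b)
    (hFshift : ∀ (u : Fin d → ℤ) (c : (Fin d → ℤ) → G),
      F (fun v => c (v + u)) = fun v => F c (v + u))
    (hFtrans : TopologicallyTransitive F) :
    TopologicallyTransitive (fun p : ((Fin d → ℤ) → G) × ((Fin d → ℤ) → G) =>
      (F p.1, F p.2)) := by
  classical
  intro U V hU hV hUne hVne
  obtain ⟨⟨a, b⟩, hab⟩ := hUne
  obtain ⟨⟨c, e⟩, hce⟩ := hVne
  obtain ⟨U1, U2, hU1, hU2, haU1, hbU2, hU12⟩ := isOpen_prod_iff.mp hU a b hab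
  obtain ⟨V1, V2, hV1, hV2, hcV1, heV2, hV12⟩ := isOpen_prod_iff.mp hV c e hce
  obtain ⟨S1, hS1⟩ := cyl_subset hU1 haU1
  obtain ⟨S2, hS2⟩ := cyl_subset hU2 hbU2
  obtain ⟨S3, hS3⟩ := cyl_subset hV1 hcV1
  obtain ⟨S4, hS4⟩ := cyl_subset hV2 heV2
  set S : Finset (Fin d → ℤ) := S1 ∪ S2 ∪ S3 ∪ S4 with hSdef
  have hS1' : S1 ⊆ S := by intro v hv; simp [hSdef, hv]
  have hS2' : S2 ⊆ S := by intro v hv; simp [hSdef, hv]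
  have hS3' : S3 ⊆ S := by intro v hv; simp [hSdef, hv]
  have hS4' : S4 ⊆ S := by intro v hv; simp [hSdef, hv]
  obtain ⟨w, hw⟩ := separation hd S
  -- merged cylinders
  set U' : Set ((Fin d → ℤ) → G) :=
    {z | (∀ v ∈ S, z v = a v) ∧ ∀ v ∈ S, z (v + w) = b v} with hU'def
  set V' : Set ((Fin d → ℤ) → G) :=
    {z | (∀ v ∈ S, z v = c v) ∧ ∀ v ∈ S, z (v + w) = e v} with hV'def
  have hopen : ∀ (p q : (Fin d → ℤ) → G), IsOpen
      {z : (Fin d → ℤ) → G | (∀ v ∈ S, z v = p v) ∧ ∀ v ∈ S, z (v + w) = q v} := by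
    intro p q
    have : {z : (Fin d → ℤ) → G | (∀ v ∈ S, z v = p v) ∧ ∀ v ∈ S, z (v + w) = q v}
        = (⋂ v ∈ S, {z : (Fin d → ℤ) → G | z v = p v}) ∩
          (⋂ v ∈ S, {z : (Fin d → ℤ) → G | z (v + w) = q v}) := by
      ext z; simp [Set.mem_iInter]
    rw [this]
    refine IsOpen.inter ?_ ?_ <;>
      refine isOpen_biInter_finset (fun v _ => ?_)
    · show IsOpen ((fun z : (Fin d → ℤ) → G => z v) ⁻¹' {p v})
      exact (isOpen_discrete ({p v} : Set G)).preimage (continuous_apply v)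
    · show IsOpen ((fun z : (Fin d → ℤ) → G => z (v + w)) ⁻¹' {q v})
      exact (isOpen_discrete ({q v} : Set G)).preimage (continuous_apply (v + w))
  have hne : ∀ (p q : (Fin d → ℤ) → G),
      ({z : (Fin d → ℤ) → G | (∀ v ∈ S, z v = p v) ∧ ∀ v ∈ S, z (v + w) = q v}).Nonempty := by
    intro p q
    refine ⟨fun v => if v ∈ S then p v else q (v - w), ?_, ?_⟩
    · intro v hv; simp [hv]
    · intro v hv
      have : v + w ∉ S := hw v hv
      simp [this]
  obtain ⟨n, r, ⟨z, hzU', hzr⟩, hrV'⟩ := hFtrans U' V' (hopen a b) (hopen c e) (hne a b) (hne c e)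
  subst hzr
  refine ⟨n, (F^[n] z, F^[n] (fun v => z (v + w))), ⟨(z, fun v => z (v + w)), ?_, ?_⟩, ?_⟩
  · -- (z, τ z) ∈ U
    apply hU12
    constructor
    · exact hS1 z (fun v hv => hzU'.1 v (hS1' hv))
    · exact hS2 _ (fun v hv => hzU'.2 v (hS2' hv))
  · exact prod_iter F n z _
  · -- image in V
    apply hV12
    constructor
    · exact hS3 _ (fun v hv => hrV'.1 v (hS3' hv))
    · rw [iter_shift F hFshift n w z]
      exact hS4 _ (fun v hv => hrV'.2 v (hS4' hv))
end

section
/- Let d be a positive integer, G a finite group, and F a topologically transitive GCA on G^{Z^d}. Then F is topologically mixing: for every pair of nonempty open sets U, V ⊆ G^{Z^d} there exists n₀ ≥ 1 such that F^n(U) ∩ V ≠ ∅ for all n ≥ n₀. -/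
/-!
`X = G^{ℤ^d}` is a profinite group and `F` a continuous endomorphism of it; transitivity forbids
proper nonempty clopen `F`-invariant sets, which makes `F` surjective. Fix an open normal subgroup
`N` and put `Y n = N ⊔ F^n(N)`. Both `Y n` and `(F^n)⁻¹(Y n)` contain `N`, and only finitely many
subgroups do, so if `Y n ≠ X` for infinitely many `n`, some proper `H = Y a = Y b` with `a < b`
has `(F^a)⁻¹ H = (F^b)⁻¹ H`. By surjectivity `F^(b-a)` then maps `H` into itself, and
`⋂_{j < b-a} (F^j)⁻¹ H` is a proper nonempty clopen `F`-invariant set. Hence `N ⊔ F^n(N) = X` for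
all large `n`, which says that `F^n` maps every coset of `N` onto a set meeting every coset of `N`.
-/

open Filter Function Set

theorem Subgroup.finite_Ici {G : Type*} [Group G] (N : Subgroup G) [N.Normal] [Finite (G ⧸ N)] :
    (Ici N).Finite :=
  (finite_range (Subgroup.comap (QuotientGroup.mk' N))).subset fun K hK =>
    ⟨K.map (QuotientGroup.mk' N), by rw [QuotientGroup.comap_map_mk', sup_eq_right.2 hK]⟩

theorem Subgroup.exists_map_mul_eq_mul_of_sup_map_eq_top {G : Type*} [Group G]
    {N : Subgroup G} [N.Normal] {f : G →* G} (h : N ⊔ N.map f = ⊤) (u v : G) :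
    ∃ z ∈ N, ∃ y ∈ N, f (u * z) = v * y := by
  have hmem : (f u)⁻¹ * v ∈ ((N.map f ⊔ N : Subgroup G) : Set G) := by
    rw [sup_comm, h]; trivial
  rw [Subgroup.mul_normal] at hmem
  obtain ⟨_, ⟨z, hz, rfl⟩, y, hy, hzy : f z * y = (f u)⁻¹ * v⟩ := hmem
  refine ⟨z, hz, y⁻¹, inv_mem hy, ?_⟩
  rw [map_mul, eq_mul_inv_iff_mul_eq, mul_assoc, hzy, mul_inv_cancel_left]

namespace TopologicallyTransitive

section Space

variable {X : Type*} [TopologicalSpace X] {T : X → X}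

theorem eq_empty_or_eq_univ_of_mapsTo (hT : TopologicallyTransitive T) {Z : Set X}
    (hZ : IsClopen Z) (hTZ : MapsTo T Z Z) : Z = ∅ ∨ Z = univ := by
  by_contra! h
  obtain ⟨n, _, ⟨x, hx, rfl⟩, hxZ⟩ := hT Z Zᶜ hZ.isOpen hZ.compl.isOpen
    h.1 (nonempty_compl.2 h.2)
  exact hxZ (hTZ.iterate n hx)

theorem surjective_s8 [CompactSpace X] [T2Space X] [TotallyDisconnectedSpace X]
    (hT : TopologicallyTransitive T) (hTc : Continuous T) : Surjective T := by
  intro z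
  by_contra hz
  obtain ⟨W, ⟨hzW, hW⟩, hWr⟩ := (nhds_basis_clopen z).mem_iff.1
    ((isCompact_range hTc).isClosed.isOpen_compl.mem_nhds hz)
  -- `Wᶜ` contains the range of `T`, hence is forward invariant.
  have hinv : MapsTo T Wᶜ Wᶜ := fun x _ hx => hWr hx ⟨x, rfl⟩
  rcases hT.eq_empty_or_eq_univ_of_mapsTo hW.compl hinv with h | h
  · exact eq_empty_iff_forall_notMem.1 h (T z) fun hTz => hWr hTz ⟨z, rfl⟩
  · exact eq_univ_iff_forall.1 h z hzW

end Space

section Group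

variable {X : Type*} [Group X] [TopologicalSpace X] [IsTopologicalGroup X] {F : Monoid.End X}

theorem eq_top_of_le_comap_pow (hT : TopologicallyTransitive F) (hF : Continuous F)
    {H : Subgroup X} (hH : IsOpen (H : Set X)) {m : ℕ} (hm : 0 < m)
    (hHm : H ≤ H.comap (F ^ m)) : H = ⊤ := by
  set Z : Subgroup X := ⨅ j : Fin m, H.comap (F ^ (j : ℕ))
  have hZ : IsOpen (Z : Set X) := by
    rw [Subgroup.coe_iInf]
    exact isOpen_iInter_of_finite fun j => hH.preimage (hF.iterate j)
  have hinv : MapsTo F Z Z := by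
    intro x hx
    simp only [SetLike.mem_coe, Z, Subgroup.mem_iInf] at hx ⊢
    intro j
    change (F ^ (j : ℕ) * F) x ∈ H
    rw [← pow_succ]
    rcases (show (j : ℕ) + 1 ≤ m from j.2).lt_or_eq with hj | hj
    · exact hx ⟨j + 1, hj⟩
    · rw [hj]
      exact hHm (hx ⟨0, hm⟩)
  rcases hT.eq_empty_or_eq_univ_of_mapsTo ⟨Subgroup.isClosed_of_isOpen Z hZ, hZ⟩ hinv with h | h
  · exact absurd Z.one_mem (eq_empty_iff_forall_notMem.1 h 1)
  · exact eq_top_iff.2 fun x _ => Subgroup.mem_iInf.1 (eq_univ_iff_forall.1 h x) ⟨0, hm⟩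

theorem eq_top_of_comap_pow_eq (hT : TopologicallyTransitive F) (hF : Continuous F)
    (hsurj : Surjective F) {H : Subgroup X} (hH : IsOpen (H : Set X)) {a b : ℕ} (hab : a < b)
    (h : H.comap (F ^ a) = H.comap (F ^ b)) : H = ⊤ := by
  refine hT.eq_top_of_le_comap_pow hF hH (Nat.sub_pos_of_lt hab) fun x hx => ?_
  obtain ⟨y, rfl⟩ := hsurj.iterate a x
  have hy : y ∈ H.comap (F ^ b) := h ▸ hx
  rwa [← Nat.sub_add_cancel hab.le, pow_add] at hy

theorem eventually_sup_map_pow_eq_top [CompactSpace X] (hT : TopologicallyTransitive F)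
    (hF : Continuous F) (hsurj : Surjective F) {N : Subgroup X} [N.Normal]
    (hN : IsOpen (N : Set X)) : ∀ᶠ n in atTop, N ⊔ N.map (F ^ n) = ⊤ := by
  have : Finite (X ⧸ N) := Subgroup.quotient_finite_of_isOpen N hN
  rw [← Nat.cofinite_eq_atTop, eventually_cofinite]
  by_contra hbad
  set Y : ℕ → Subgroup X := fun n => N ⊔ N.map (F ^ n)
  have hmaps : MapsTo (fun n => (Y n, (Y n).comap (F ^ n))) {n | Y n ≠ ⊤} (Ici N ×ˢ Ici N) :=
    fun n _ => ⟨show N ≤ Y n from le_sup_left,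
      fun x hx => (le_sup_right : N.map (F ^ n) ≤ Y n) (Subgroup.mem_map_of_mem _ hx)⟩
  obtain ⟨a, ha, b, -, hab, hY⟩ :=
    Set.Infinite.exists_lt_map_eq_of_mapsTo hbad hmaps (N.finite_Ici.prod N.finite_Ici)
  obtain ⟨hYab, hcomap⟩ := Prod.mk.inj hY
  refine ha (hT.eq_top_of_comap_pow_eq hF hsurj (Subgroup.isOpen_mono le_sup_left hN) hab ?_)
  rwa [← hYab] at hcomap

theorem eventually_image_iterate_inter_nonempty [CompactSpace X] [TotallyDisconnectedSpace X]
    (hT : TopologicallyTransitive F) (hF : Continuous F) {U V : Set X} (hU : IsOpen U)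
    (hV : IsOpen V) (hU' : U.Nonempty) (hV' : V.Nonempty) :
    ∀ᶠ n in atTop, ((⇑F)^[n] '' U ∩ V).Nonempty := by
  obtain ⟨u, hu⟩ := hU'
  obtain ⟨v, hv⟩ := hV'
  obtain ⟨N, hN⟩ := ProfiniteGrp.exist_openNormalSubgroup_sub_open_nhds_of_one
    ((hU.preimage (continuous_const_mul u)).inter (hV.preimage (continuous_const_mul v)))
    (by simpa using And.intro hu hv)
  filter_upwards [hT.eventually_sup_map_pow_eq_top hF (hT.surjective_s8 hF) N.isOpen] with n hn
  obtain ⟨z, hz, y, hy, hzy⟩ := Subgroup.exists_map_mul_eq_mul_of_sup_map_eq_top hn u v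
  exact ⟨(F ^ n) (u * z), mem_image_of_mem _ (hN hz).1, hzy ▸ (hN hy).2⟩

end Group

end TopologicallyTransitive

theorem stmt8_general (d : ℕ) (G : Type*) [Group G] [Finite G]
    [TopologicalSpace G] [DiscreteTopology G]
    (F : ((Fin d → ℤ) → G) → ((Fin d → ℤ) → G))
    (hFcont : Continuous F)
    (hFhom : ∀ a b : (Fin d → ℤ) → G, F (a * b) = F a * F b)
    (hFtrans : TopologicallyTransitive F) :
    ∀ U V : Set ((Fin d → ℤ) → G), IsOpen U → IsOpen V → U.Nonempty → V.Nonempty →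
      ∃ n₀ : ℕ, 1 ≤ n₀ ∧ ∀ n ≥ n₀, (F^[n] '' U ∩ V).Nonempty := by
  intro U V hU hV hU' hV'
  obtain ⟨n₀, hn₀⟩ := eventually_atTop.1 <|
    TopologicallyTransitive.eventually_image_iterate_inter_nonempty (F := MonoidHom.mk' F hFhom)
      hFtrans hFcont hU hV hU' hV'
  exact ⟨max n₀ 1, le_max_right _ _, fun n hn => hn₀ n (le_of_max_le_left hn)⟩

theorem stmt8 (d : ℕ) (hd : 0 < d) (G : Type*) [Group G] [Finite G]
    [TopologicalSpace G] [DiscreteTopology G]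
    (F : ((Fin d → ℤ) → G) → ((Fin d → ℤ) → G))
    (hFcont : Continuous F)
    (hFhom : ∀ a b : (Fin d → ℤ) → G, F (a * b) = F a * F b)
    (hFshift : ∀ (u : Fin d → ℤ) (c : (Fin d → ℤ) → G),
      F (fun v => c (v + u)) = fun v => F c (v + u))
    (hFtrans : TopologicallyTransitive F) :
    ∀ U V : Set ((Fin d → ℤ) → G), IsOpen U → IsOpen V → U.Nonempty → V.Nonempty →
      ∃ n₀ : ℕ, 1 ≤ n₀ ∧ ∀ n ≥ n₀, (F^[n] '' U ∩ V).Nonempty :=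
  stmt8_general d G F hFcont hFhom hFtrans
end

section
/- Let d be a positive integer, G a finite group, and F a topologically transitive GCA on G^{Z^d}. Then F is totally transitive: for every integer k ≥ 1 the k-th iterate F^k is topologically transitive. -/
set_option linter.unusedSectionVars false

namespace GCAaux

variable {d : ℕ} {G : Type*}

/-- The shift by `u`. -/
def sh (u : Fin d → ℤ) (c : (Fin d → ℤ) → G) : (Fin d → ℤ) → G := fun v => c (v + u)

section Grp
variable [Group G]

/-- A cylinder: the set of configurations agreeing with `x` on `Ω`. -/
def Cyl (Ω : Finset (Fin d → ℤ)) (x : (Fin d → ℤ) → G) : Set ((Fin d → ℤ) → G) :=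
  {y | ∀ v ∈ Ω, y v = x v}

lemma mem_cyl_self (Ω : Finset (Fin d → ℤ)) (x : (Fin d → ℤ) → G) : x ∈ Cyl Ω x :=
  fun _ _ => rfl

variable [TopologicalSpace G] [DiscreteTopology G]

lemma cyl_isOpen (Ω : Finset (Fin d → ℤ)) (x : (Fin d → ℤ) → G) : IsOpen (Cyl Ω x) := by
  have : Cyl Ω x = ⋂ v ∈ Ω, (fun y : (Fin d → ℤ) → G => y v) ⁻¹' {x v} := by
    ext y; simp [Cyl, Set.mem_iInter]
  rw [this]
  exact isOpen_biInter_finset fun v _ => (continuous_apply v).isOpen_preimage _ (isOpen_discrete _)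

lemma exists_cyl_subset {U : Set ((Fin d → ℤ) → G)} (hU : IsOpen U)
    {x : (Fin d → ℤ) → G} (hx : x ∈ U) : ∃ Ω : Finset (Fin d → ℤ), Cyl Ω x ⊆ U := by
  obtain ⟨I, u, h1, h2⟩ := isOpen_pi_iff.mp hU x hx
  refine ⟨I, fun y hy => h2 ?_⟩
  intro v hv
  have := hy v hv
  rw [this]
  exact (h1 v hv).2

section Fhom
variable {F : ((Fin d → ℤ) → G) → ((Fin d → ℤ) → G)}
variable (hFhom : ∀ a b : (Fin d → ℤ) → G, F (a * b) = F a * F b)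

include hFhom

lemma F_one : F 1 = 1 := by
  have h := hFhom 1 1
  rw [mul_one] at h
  exact (mul_left_cancel (show F 1 * 1 = F 1 * F 1 by rw [mul_one]; exact h)).symm

lemma iter_hom (m : ℕ) (a b : (Fin d → ℤ) → G) :
    F^[m] (a * b) = F^[m] a * F^[m] b := by
  induction m with
  | zero => simp
  | succ t ih =>
    rw [Function.iterate_succ_apply', Function.iterate_succ_apply',
      Function.iterate_succ_apply', ih, hFhom]

lemma iter_one (m : ℕ) : F^[m] (1 : (Fin d → ℤ) → G) = 1 := by
  induction m with
  | zero => simp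
  | succ t ih => rw [Function.iterate_succ_apply', ih, F_one hFhom]

lemma iter_inv (m : ℕ) (a : (Fin d → ℤ) → G) : F^[m] a⁻¹ = (F^[m] a)⁻¹ := by
  have h : F^[m] a⁻¹ * F^[m] a = 1 := by
    rw [← iter_hom hFhom, inv_mul_cancel, iter_one hFhom]
  exact eq_inv_of_mul_eq_one_left h

end Fhom

section Fshift
variable {F : ((Fin d → ℤ) → G) → ((Fin d → ℤ) → G)}
variable (hFshift : ∀ (u : Fin d → ℤ) (c : (Fin d → ℤ) → G),
      F (fun v => c (v + u)) = fun v => F c (v + u))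

include hFshift

lemma iter_shift (m : ℕ) (u : Fin d → ℤ) (c : (Fin d → ℤ) → G) :
    F^[m] (sh u c) = sh u (F^[m] c) := by
  induction m with
  | zero => simp
  | succ t ih =>
    rw [Function.iterate_succ_apply', Function.iterate_succ_apply', ih]
    exact hFshift u (F^[t] c)

end Fshift

end Grp

section Main
variable [Group G] [Finite G] [TopologicalSpace G] [DiscreteTopology G]
variable {F : ((Fin d → ℤ) → G) → ((Fin d → ℤ) → G)}

lemma F_surj (hd : 0 < d) [Nontrivial G] (hFcont : Continuous F)
    (hFtrans : TopologicallyTransitive F) : Function.Surjective F := by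
  have hInf : Infinite (Fin d → ℤ) := by
    have : Nonempty (Fin d) := ⟨⟨0, hd⟩⟩
    infer_instance
  by_contra hsurj
  rw [Function.Surjective] at hsurj
  push_neg at hsurj
  obtain ⟨c₀, hc₀⟩ := hsurj
  have hclosed : IsClosed (Set.range F) := (isCompact_range hFcont).isClosed
  have hopen : IsOpen (Set.range F)ᶜ := hclosed.isOpen_compl
  have hc₀mem : c₀ ∈ (Set.range F)ᶜ := by
    intro h
    obtain ⟨x, hx⟩ := h
    exact hc₀ x hx
  obtain ⟨Ω, hΩ⟩ := exists_cyl_subset hopen hc₀mem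
  obtain ⟨w, hw⟩ := Infinite.exists_notMem_finset Ω
  obtain ⟨g, hg⟩ := exists_ne (1 : G)
  classical
  set c₂ := Function.update c₀ w (c₀ w * g) with hc₂
  have hdisj : Cyl (insert w Ω) c₀ ∩ Cyl (insert w Ω) c₂ = ∅ := by
    ext z
    simp only [Set.mem_inter_iff, Set.mem_empty_iff_false, iff_false, not_and]
    intro h1 h2
    have e1 := h1 w (Finset.mem_insert_self w Ω)
    have e2 := h2 w (Finset.mem_insert_self w Ω)
    rw [hc₂, Function.update_self] at e2
    rw [e1] at e2
    exact hg (left_eq_mul.mp e2)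
  have hsub : Cyl (insert w Ω) c₂ ⊆ (Set.range F)ᶜ := by
    intro y hy
    apply hΩ
    intro v hv
    have hvne : v ≠ w := fun h => hw (h ▸ hv)
    have := hy v (Finset.mem_insert_of_mem hv)
    rw [this, hc₂, Function.update_of_ne hvne]
  obtain ⟨n, z, ⟨x, hx, hFx⟩, hz2⟩ := hFtrans (Cyl (insert w Ω) c₀) (Cyl (insert w Ω) c₂)
    (cyl_isOpen _ _) (cyl_isOpen _ _) ⟨c₀, mem_cyl_self _ _⟩ ⟨c₂, mem_cyl_self _ _⟩
  cases n with
  | zero =>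
    rw [Function.iterate_zero_apply] at hFx
    have : z ∈ Cyl (insert w Ω) c₀ ∩ Cyl (insert w Ω) c₂ := ⟨hFx ▸ hx, hz2⟩
    rw [hdisj] at this
    exact this
  | succ t =>
    rw [Function.iterate_succ_apply'] at hFx
    exact hsub hz2 ⟨F^[t] x, hFx⟩

end Main

section Club
variable [Group G] [Finite G] [TopologicalSpace G] [DiscreteTopology G]
variable {F : ((Fin d → ℤ) → G) → ((Fin d → ℤ) → G)}

/-- Key lemma: for a transitive GCA there is a single time `m` at which the image of the
subgroup of configurations trivial on `E` realizes every pattern on `E'`. -/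
lemma club (hd : 0 < d)
    (hFhom : ∀ a b : (Fin d → ℤ) → G, F (a * b) = F a * F b)
    (hFshift : ∀ (u : Fin d → ℤ) (c : (Fin d → ℤ) → G),
      F (fun v => c (v + u)) = fun v => F c (v + u))
    (hFtrans : TopologicallyTransitive F)
    (E E' : Finset (Fin d → ℤ)) :
    ∃ m : ℕ, ∀ y : (Fin d → ℤ) → G, ∃ ν : (Fin d → ℤ) → G,
      (∀ v ∈ E, ν v = 1) ∧ (∀ v ∈ E', F^[m] ν v = y v) := by
  classical
  have hInf : Infinite (Fin d → ℤ) := by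
    have : Nonempty (Fin d) := ⟨⟨0, hd⟩⟩
    infer_instance
  -- pattern sets
  set Pat := ({v // v ∈ E'} → G) with hPat
  set ψ : ℕ → Set Pat := fun n =>
    {p | ∃ ν : (Fin d → ℤ) → G, (∀ v ∈ E, ν v = 1) ∧
      ∀ v : {v // v ∈ E'}, F^[n] ν ↑v = p v} with hψ
  set Cc : Set Pat → Set ((Fin d → ℤ) → G) := fun P =>
    {y | ∀ u : Fin d → ℤ, (fun v : {v // v ∈ E'} => y (↑v + u)) ∈ P} with hCc
  -- ψ n is closed under the group operations
  have psi_one : ∀ n, (1 : Pat) ∈ ψ n := by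
    intro n
    refine ⟨1, fun v _ => rfl, fun v => ?_⟩
    rw [iter_one hFhom]
    rfl
  have psi_mul : ∀ n (p q : Pat), p ∈ ψ n → q ∈ ψ n → p * q ∈ ψ n := by
    rintro n p q ⟨ν, hν1, hν2⟩ ⟨ν', hν'1, hν'2⟩
    refine ⟨ν * ν', fun v hv => ?_, fun v => ?_⟩
    · rw [Pi.mul_apply, hν1 v hv, hν'1 v hv, mul_one]
    · rw [iter_hom hFhom, Pi.mul_apply, hν2 v, hν'2 v]
      rfl
  have psi_inv : ∀ n (p : Pat), p ∈ ψ n → p⁻¹ ∈ ψ n := by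
    rintro n p ⟨ν, hν1, hν2⟩
    refine ⟨ν⁻¹, fun v hv => ?_, fun v => ?_⟩
    · rw [Pi.inv_apply, hν1 v hv, inv_one]
    · rw [iter_inv hFhom, Pi.inv_apply, hν2 v]
      rfl
  -- each Cc P is closed
  have cc_closed : ∀ P : Set Pat, IsClosed (Cc P) := by
    intro P
    have hrw : Cc P = ⋂ u : Fin d → ℤ,
        {y : (Fin d → ℤ) → G | (fun v : {v // v ∈ E'} => y (↑v + u)) ∈ P} := by
      ext y
      simp [hCc, Set.mem_iInter]
    rw [hrw]
    refine isClosed_iInter fun u => ?_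
    rw [← isOpen_compl_iff, isOpen_iff_forall_mem_open]
    intro y₀ hy₀
    refine ⟨Cyl (E'.image (· + u)) y₀, ?_, cyl_isOpen _ _, mem_cyl_self _ _⟩
    intro z hz
    have hpq : (fun v : {v // v ∈ E'} => z (↑v + u)) =
        (fun v : {v // v ∈ E'} => y₀ (↑v + u)) := by
      funext v
      exact hz (↑v + u) (Finset.mem_image.mpr ⟨↑v, v.2, rfl⟩)
    simp only [Set.mem_compl_iff, Set.mem_setOf_eq] at hy₀ ⊢
    rw [hpq]
    exact hy₀
  -- the sets Cc (ψ n) cover the whole space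
  have hcover : ∀ y : (Fin d → ℤ) → G, ∃ n : ℕ, y ∈ Cc (ψ n) := by
    intro y
    obtain ⟨e, he⟩ := exists_surjective_nat (Fin d → ℤ)
    set S : ℕ → Finset (Fin d → ℤ) := fun t => (Finset.range (t + 1)).image e with hS
    set EE : ℕ → Finset (Fin d → ℤ) := fun t => (S t).biUnion (fun u => E.image (· + u)) with hEE
    set EE' : ℕ → Finset (Fin d → ℤ) := fun t => (S t).biUnion (fun u => E'.image (· + u))
      with hEE'
    have H : ∀ t : ℕ, ∃ (n : ℕ) (ν : (Fin d → ℤ) → G),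
        (∀ v ∈ EE t, ν v = 1) ∧ ∀ v ∈ EE' t, F^[n] ν v = y v := by
      intro t
      obtain ⟨n, z, ⟨ν, hν, hFν⟩, hzV⟩ := hFtrans (Cyl (EE t) 1) (Cyl (EE' t) y)
        (cyl_isOpen _ _) (cyl_isOpen _ _) ⟨1, mem_cyl_self _ _⟩ ⟨y, mem_cyl_self _ _⟩
      refine ⟨n, ν, fun v hv => hν v hv, fun v hv => ?_⟩
      rw [hFν]
      exact hzV v hv
    choose nn νν hh1 hh2 using H
    haveI : Finite (Set Pat) := inferInstance
    obtain ⟨P, hP⟩ := Finite.exists_infinite_fiber (fun t => ψ (nn t))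
    have hPinf : ((fun t => ψ (nn t)) ⁻¹' {P}).Infinite := Set.infinite_coe_iff.mp hP
    obtain ⟨t₀, ht₀⟩ := hPinf.nonempty
    refine ⟨nn t₀, ?_⟩
    intro u
    obtain ⟨t₁, rfl⟩ := he u
    obtain ⟨t, htmem, htgt⟩ := hPinf.exists_gt t₁
    have hu : e t₁ ∈ S t := Finset.mem_image.mpr ⟨t₁, Finset.mem_range.mpr (by omega), rfl⟩
    have hPt₀ : ψ (nn t₀) = P := ht₀
    have hPt : ψ (nn t) = P := htmem
    rw [hPt₀, ← hPt]
    refine ⟨sh (e t₁) (νν t), fun v hv => ?_, fun v => ?_⟩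
    · exact hh1 t (v + e t₁)
        (Finset.mem_biUnion.mpr ⟨e t₁, hu, Finset.mem_image.mpr ⟨v, hv, rfl⟩⟩)
    · rw [iter_shift hFshift]
      exact hh2 t (↑v + e t₁)
        (Finset.mem_biUnion.mpr ⟨e t₁, hu, Finset.mem_image.mpr ⟨↑v, v.2, rfl⟩⟩)
  -- Baire: one of the Cc (ψ n) has nonempty interior
  haveI : BaireSpace ((Fin d → ℤ) → G) := BaireSpace.of_t2Space_locallyCompactSpace
  have hUnion : ⋃ n : ℕ, Cc (ψ n) = Set.univ := by
    rw [Set.eq_univ_iff_forall]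
    intro y
    obtain ⟨n, hn⟩ := hcover y
    exact Set.mem_iUnion.mpr ⟨n, hn⟩
  obtain ⟨m, q, hq⟩ := nonempty_interior_of_iUnion_of_closed (fun n => cc_closed (ψ n)) hUnion
  refine ⟨m, ?_⟩
  -- Cc (ψ m) is a subgroup
  have cc_one : (1 : (Fin d → ℤ) → G) ∈ Cc (ψ m) := by
    intro u
    have : (fun v : {v // v ∈ E'} => (1 : (Fin d → ℤ) → G) (↑v + u)) = (1 : Pat) := rfl
    rw [this]
    exact psi_one m
  have cc_mul : ∀ y z : (Fin d → ℤ) → G,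
      y ∈ Cc (ψ m) → z ∈ Cc (ψ m) → y * z ∈ Cc (ψ m) := by
    intro y z hy hz u
    have : (fun v : {v // v ∈ E'} => (y * z) (↑v + u)) =
        (fun v : {v // v ∈ E'} => y (↑v + u)) * (fun v : {v // v ∈ E'} => z (↑v + u)) := rfl
    rw [this]
    exact psi_mul m _ _ (hy u) (hz u)
  have cc_inv : ∀ y : (Fin d → ℤ) → G, y ∈ Cc (ψ m) → y⁻¹ ∈ Cc (ψ m) := by
    intro y hy u
    have : (fun v : {v // v ∈ E'} => y⁻¹ (↑v + u)) =
        (fun v : {v // v ∈ E'} => y (↑v + u))⁻¹ := rfl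
    rw [this]
    exact psi_inv m _ (hy u)
  -- Cc (ψ m) is shift-invariant
  have cc_shift : ∀ (w : Fin d → ℤ) (y : (Fin d → ℤ) → G),
      y ∈ Cc (ψ m) → sh w y ∈ Cc (ψ m) := by
    intro w y hy u
    have hfun : (fun v : {v // v ∈ E'} => (sh w y) (↑v + u)) =
        (fun v : {v // v ∈ E'} => y (↑v + (u + w))) := by
      funext v
      show y (↑v + u + w) = y (↑v + (u + w))
      rw [add_assoc]
    rw [hfun]
    exact hy (u + w)
  -- A full cylinder subgroup sits inside Cc (ψ m)
  obtain ⟨Ω₀, hΩ₀⟩ := exists_cyl_subset isOpen_interior hq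
  have hqC : q ∈ Cc (ψ m) := interior_subset hq
  have hN : ∀ ν : (Fin d → ℤ) → G, (∀ v ∈ Ω₀, ν v = 1) → ν ∈ Cc (ψ m) := by
    intro ν hν
    have h1 : q * ν ∈ Cyl Ω₀ q := by
      intro v hv
      rw [Pi.mul_apply, hν v hv, mul_one]
    have h2 : q * ν ∈ Cc (ψ m) := interior_subset (hΩ₀ h1)
    have hrw : ν = q⁻¹ * (q * ν) := by rw [inv_mul_cancel_left]
    rw [hrw]
    exact cc_mul _ _ (cc_inv _ hqC) h2
  -- single-site configurations lie in Cc (ψ m)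
  have hsingle : ∀ (v₀ : Fin d → ℤ) (a : G),
      (fun w => if w = v₀ then a else 1) ∈ Cc (ψ m) := by
    intro v₀ a
    obtain ⟨ustar, hustar⟩ := Infinite.exists_notMem_finset (Ω₀.image (fun w => v₀ - w))
    have hτ : sh ustar (fun w => if w = v₀ then a else 1) ∈ Cc (ψ m) := by
      apply hN
      intro v hv
      show (if v + ustar = v₀ then a else 1) = 1
      rw [if_neg]
      intro hcon
      exact hustar (Finset.mem_image.mpr ⟨v, hv, by rw [← hcon]; abel⟩)
    have hback : (fun w => if w = v₀ then a else 1) =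
        sh (-ustar) (sh ustar (fun w => if w = v₀ then a else 1)) := by
      funext w
      show _ = (fun w' => if w' = v₀ then a else 1) (w + -ustar + ustar)
      rw [neg_add_cancel_right]
    rw [hback]
    exact cc_shift _ _ hτ
  -- any finite pattern can be matched inside Cc (ψ m)
  have hfill : ∀ (Ω : Finset (Fin d → ℤ)) (x : (Fin d → ℤ) → G),
      ∃ c ∈ Cc (ψ m), ∀ v ∈ Ω, c v = x v := by
    intro Ω
    induction Ω using Finset.induction_on with
    | empty => intro x; exact ⟨1, cc_one, by simp⟩
    | @insert a s ha ih =>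
      intro x
      obtain ⟨c', hc', hc'v⟩ := ih x
      refine ⟨(fun w => if w = a then x a * (c' a)⁻¹ else 1) * c',
        cc_mul _ _ (hsingle a _) hc', ?_⟩
      intro v hv
      rcases Finset.mem_insert.mp hv with rfl | hv'
      · show (if v = v then x v * (c' v)⁻¹ else 1) * c' v = x v
        rw [if_pos rfl, inv_mul_cancel_right]
      · have hne : v ≠ a := by
          intro h
          exact ha (h ▸ hv')
        show (if v = a then x a * (c' a)⁻¹ else 1) * c' v = x v
        rw [if_neg hne, one_mul]
        exact hc'v v hv'
  -- hence Cc (ψ m) is dense, and being closed it is everything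
  have hdense : Dense (Cc (ψ m)) := by
    rw [dense_iff_inter_open]
    rintro U hU ⟨x, hx⟩
    obtain ⟨Ω, hΩ⟩ := exists_cyl_subset hU hx
    obtain ⟨c, hcC, hcv⟩ := hfill Ω x
    exact ⟨c, hΩ (fun v hv => hcv v hv), hcC⟩
  have hall : Cc (ψ m) = Set.univ := by
    rw [← (cc_closed (ψ m)).closure_eq]
    exact hdense.closure_eq
  -- extract the conclusion at u = 0
  intro y
  have hy : y ∈ Cc (ψ m) := hall ▸ Set.mem_univ y
  have h0 := hy 0
  have hfun : (fun v : {v // v ∈ E'} => y (↑v + 0)) = (fun v : {v // v ∈ E'} => y ↑v) := by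
    funext v
    rw [add_zero]
  rw [hfun] at h0
  obtain ⟨ν, hν1, hν2⟩ := h0
  exact ⟨ν, hν1, fun v hv => hν2 ⟨v, hv⟩⟩

end Club

end GCAaux


theorem stmt9 (d : ℕ) (hd : 0 < d) (G : Type*) [Group G] [Finite G]
    [TopologicalSpace G] [DiscreteTopology G]
    (F : ((Fin d → ℤ) → G) → ((Fin d → ℤ) → G))
    (hFcont : Continuous F)
    (hFhom : ∀ a b : (Fin d → ℤ) → G, F (a * b) = F a * F b)
    (hFshift : ∀ (u : Fin d → ℤ) (c : (Fin d → ℤ) → G),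
      F (fun v => c (v + u)) = fun v => F c (v + u))
    (hFtrans : TopologicallyTransitive F) :
    ∀ k : ℕ, 1 ≤ k → TopologicallyTransitive (F^[k]) := by
  intro k hk
  rcases subsingleton_or_nontrivial G with hG | hG
  · -- trivial alphabet: the space is a single point
    intro U V hU hV hUne hVne
    obtain ⟨x, hx⟩ := hUne
    obtain ⟨x', hx'⟩ := hVne
    refine ⟨0, x, ?_⟩
    simp only [Function.iterate_zero, Set.image_id]
    exact ⟨hx, (Subsingleton.elim x' x) ▸ hx'⟩
  · intro U V hU hV hUne hVne
    obtain ⟨xU, hxU⟩ := hUne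
    obtain ⟨xV, hxV⟩ := hVne
    obtain ⟨E, hE⟩ := GCAaux.exists_cyl_subset hU hxU
    obtain ⟨E', hE'⟩ := GCAaux.exists_cyl_subset hV hxV
    have hsurj : Function.Surjective F := GCAaux.F_surj hd hFcont hFtrans
    have hFcont_iter : ∀ j : ℕ, Continuous (F^[j]) := by
      intro j
      induction j with
      | zero => simpa using continuous_id
      | succ t ih =>
        rw [Function.iterate_succ']
        exact hFcont.comp ih
    set W : Set ((Fin d → ℤ) → G) :=
      ⋂ j ∈ Finset.range k, (F^[j]) ⁻¹' (GCAaux.Cyl E' 1) with hW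
    have hWopen : IsOpen W :=
      isOpen_biInter_finset fun j _ =>
        (hFcont_iter j).isOpen_preimage _ (GCAaux.cyl_isOpen _ _)
    have hWone : (1 : (Fin d → ℤ) → G) ∈ W := by
      rw [hW]
      refine Set.mem_iInter₂.mpr fun j _ => ?_
      rw [Set.mem_preimage, GCAaux.iter_one hFhom]
      exact GCAaux.mem_cyl_self _ _
    obtain ⟨E'', hE''⟩ := GCAaux.exists_cyl_subset hWopen hWone
    obtain ⟨m₀, hm₀⟩ := GCAaux.club hd hFhom hFshift hFtrans E E''
    have hkpos : 0 < k := hk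
    obtain ⟨j₀, n, hj₀k, hsum⟩ : ∃ j₀ n : ℕ, j₀ < k ∧ j₀ + m₀ = k * n := by
      have hqr : k * (m₀ / k) + m₀ % k = m₀ := Nat.div_add_mod m₀ k
      have hrk : m₀ % k < k := Nat.mod_lt _ hkpos
      rcases Nat.eq_zero_or_pos (m₀ % k) with h0 | hpos
      · refine ⟨0, m₀ / k, hkpos, ?_⟩
        omega
      · refine ⟨k - m₀ % k, m₀ / k + 1, by omega, ?_⟩
        have : k * (m₀ / k + 1) = k * (m₀ / k) + k := Nat.mul_succ k (m₀ / k)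
        omega
    set m := j₀ + m₀ with hm
    set c := (F^[m] xU)⁻¹ * xV with hc
    obtain ⟨y₀, hy₀⟩ := hsurj.iterate j₀ c
    obtain ⟨ν, hν1, hν2⟩ := hm₀ y₀
    set w := y₀⁻¹ * F^[m₀] ν with hwdef
    have hwW : w ∈ W := by
      apply hE''
      intro v hv
      show (y₀⁻¹ * F^[m₀] ν) v = (1 : (Fin d → ℤ) → G) v
      rw [Pi.mul_apply, Pi.inv_apply, hν2 v hv, inv_mul_cancel, Pi.one_apply]
    have hFj₀w : F^[j₀] w ∈ GCAaux.Cyl E' (1 : (Fin d → ℤ) → G) := by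
      have := Set.mem_iInter₂.mp hwW j₀ (Finset.mem_range.mpr hj₀k)
      exact this
    -- the witness point
    have hcomp : F^[m] (xU * ν) = xV * F^[j₀] w := by
      have h1 : F^[m] (xU * ν) = F^[m] xU * F^[m] ν := GCAaux.iter_hom hFhom m _ _
      have h2 : F^[m] ν = F^[j₀] (F^[m₀] ν) := Function.iterate_add_apply F j₀ m₀ ν
      have h3 : F^[m₀] ν = y₀ * w := by
        rw [hwdef, mul_inv_cancel_left]
      have h4 : F^[j₀] (y₀ * w) = c * F^[j₀] w := by
        rw [GCAaux.iter_hom hFhom, hy₀]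
      rw [h1, h2, h3, h4, hc]
      rw [← mul_assoc, ← mul_assoc, mul_inv_cancel, one_mul]
    have hmem : xU * ν ∈ U := by
      apply hE
      intro v hv
      rw [Pi.mul_apply, hν1 v hv, mul_one]
    have hpV : F^[m] (xU * ν) ∈ V := by
      apply hE'
      intro v hv
      rw [hcomp, Pi.mul_apply, hFj₀w v hv, Pi.one_apply, mul_one]
    refine ⟨n, F^[m] (xU * ν), ⟨xU * ν, hmem, ?_⟩, hpV⟩
    rw [← Function.iterate_mul, ← hsum]
end

section
/- Let d be a positive integer, S a finite non-abelian simple group, m ≥ 1, and G = S^m. Let F be a surjective GCA on G^{Z^d} that is minimal, i.e. there is no partition of {1, …, m} into two nonempty sets I and J such that F maps (∏_{i∈I} S_i)^{Z^d} into itself and maps (∏_{j∈J} S_j)^{Z^d} into itself. Then there exist an integer q ≥ 1 and a vector v ∈ Z^d such that F^q = sigma_v, i.e. some positive iterate of F equals a shift map. -/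
open Classical in
/-- configuration which is `s` at cell `x`, component `i`, and `1` elsewhere. -/
noncomputable def dltGCA {d m : ℕ} {S : Type*} [One S] (x : Fin d → ℤ) (i : Fin m) (s : S) :
    (Fin d → ℤ) → Fin m → S :=
  fun y k => if y = x ∧ k = i then s else 1

/-- iterated composition of the local automorphisms along the component permutation. -/
def AiterGCA {m : ℕ} {S : Type*} (τ : Fin m → Fin m) (α : Fin m → S → S) :
    ℕ → Fin m → S → S
  | 0, _ => id
  | (k+1), j => α j ∘ AiterGCA τ α k (τ j)

theorem stmt14 (d : ℕ) (hd : 0 < d)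
    (S : Type*) [Group S] [Finite S] [TopologicalSpace S] [DiscreteTopology S]
    (hSsimple : IsSimpleGroup S) (hSnonab : ∃ a b : S, a * b ≠ b * a)
    (m : ℕ) (hm : 1 ≤ m)
    (F : ((Fin d → ℤ) → Fin m → S) → ((Fin d → ℤ) → Fin m → S))
    (hFcont : Continuous F)
    (hFhom : ∀ a b : (Fin d → ℤ) → Fin m → S, F (a * b) = F a * F b)
    (hFshift : ∀ (u : Fin d → ℤ) (c : (Fin d → ℤ) → Fin m → S),
      F (fun v => c (v + u)) = fun v => F c (v + u))
    (hFsurj : Function.Surjective F)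
    (hFmin : ¬ ∃ I J : Set (Fin m), I.Nonempty ∧ J.Nonempty ∧
      I ∪ J = Set.univ ∧ I ∩ J = ∅ ∧
      Set.MapsTo F {c | ∀ x, ∀ j ∉ I, c x j = 1} {c | ∀ x, ∀ j ∉ I, c x j = 1} ∧
      Set.MapsTo F {c | ∀ x, ∀ j ∉ J, c x j = 1} {c | ∀ x, ∀ j ∉ J, c x j = 1}) :
    ∃ (q : ℕ) (v : Fin d → ℤ), 1 ≤ q ∧
      F^[q] = fun (c : (Fin d → ℤ) → Fin m → S) (x : Fin d → ℤ) => c (x + v) := by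
  classical
  haveI := hSsimple
  -- basic facts
  have hF1 : F 1 = 1 := by
    have h := hFhom 1 1
    rw [mul_one] at h
    exact left_eq_mul.mp h
  have hphi_mul : ∀ (j : Fin m) (a b : (Fin d → ℤ) → Fin m → S),
      F (a * b) 0 j = F a 0 j * F b 0 j := by
    intro j a b; rw [hFhom]; rfl
  have hdlt_self : ∀ (x : Fin d → ℤ) (i : Fin m) (s : S), dltGCA x i s x i = s := by
    intro x i s; simp [dltGCA]
  have hdlt_ne : ∀ (x y : Fin d → ℤ) (i k : Fin m) (s : S), ¬(y = x ∧ k = i) →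
      dltGCA x i s y k = 1 := by
    intro x y i k s h; simp only [dltGCA, if_neg h]
  have hdlt_mul : ∀ (x : Fin d → ℤ) (i : Fin m) (s t : S),
      dltGCA x i (s * t) = dltGCA x i s * dltGCA (S := S) x i t := by
    intro x i s t
    funext y k
    by_cases h : y = x ∧ k = i
    · simp [dltGCA, if_pos h]
    · simp [dltGCA, if_neg h]
  have hdlt_one : ∀ (x : Fin d → ℤ) (i : Fin m), dltGCA x i (1 : S) = 1 := by
    intro x i
    funext y k
    by_cases h : y = x ∧ k = i
    · simp [dltGCA, if_pos h]
    · simp [dltGCA, if_neg h]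
  -- a nontrivial element of S
  obtain ⟨a0, b0, hab⟩ := hSnonab
  have hs0 : ∃ s : S, s ≠ 1 := by
    by_contra h
    push_neg at h
    exact hab (by rw [h a0, h b0])
  obtain ⟨s0, hs0⟩ := hs0
  -- locality of each component map
  have hlocal : ∀ j : Fin m, ∃ W : Finset (Fin d → ℤ),
      ∀ c : (Fin d → ℤ) → Fin m → S, (∀ x ∈ W, ∀ i, c x i = 1) → F c 0 j = 1 := by
    intro j
    have hcont : Continuous (fun c : (Fin d → ℤ) → Fin m → S => F c 0 j) :=
      (continuous_apply j).comp ((continuous_apply (0 : Fin d → ℤ)).comp hFcont)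
    have hmem : {c : (Fin d → ℤ) → Fin m → S | F c 0 j = 1} ∈
        nhds (1 : (Fin d → ℤ) → Fin m → S) := by
      have hopen : IsOpen {c : (Fin d → ℤ) → Fin m → S | F c 0 j = 1} := by
        have heq : {c : (Fin d → ℤ) → Fin m → S | F c 0 j = 1}
            = (fun c => F c 0 j) ⁻¹' {1} := rfl
        rw [heq]
        exact (isOpen_discrete _).preimage hcont
      refine hopen.mem_nhds ?_
      show F 1 0 j = 1
      rw [hF1]; rfl
    rw [nhds_pi, Filter.mem_pi] at hmem
    obtain ⟨I, hIfin, t, ht, hsub⟩ := hmem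
    refine ⟨hIfin.toFinset, fun c hc => ?_⟩
    apply hsub
    intro x hx
    have hcx : c x = (1 : (Fin d → ℤ) → Fin m → S) x := by
      funext i; exact hc x (hIfin.mem_toFinset.mpr hx) i
    rw [hcx]
    exact mem_of_mem_nhds (ht x)
  -- Lemma A: finitely supported configurations with trivial delta-images map to 1
  have lemA : ∀ (j : Fin m) (V : Finset ((Fin d → ℤ) × Fin m))
      (c : (Fin d → ℤ) → Fin m → S),
      (∀ y k, (y, k) ∉ V → c y k = 1) →
      (∀ p ∈ V, F (dltGCA p.1 p.2 (c p.1 p.2)) 0 j = 1) → F c 0 j = 1 := by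
    intro j V
    induction V using Finset.induction_on with
    | empty =>
        intro c hc _
        have : c = 1 := by
          funext y k; exact hc y k (Finset.notMem_empty _)
        rw [this, hF1]; rfl
    | @insert p V hpV ih =>
        intro c hc hd
        set e : (Fin d → ℤ) → Fin m → S := dltGCA p.1 p.2 (c p.1 p.2) with he
        set c' : (Fin d → ℤ) → Fin m → S := e⁻¹ * c with hc'
        have hsplit : c = e * c' := by
          rw [hc', mul_inv_cancel_left]
        have hc'val : ∀ y k, c' y k = (e y k)⁻¹ * c y k := by
          intro y k; rfl
        have hc'supp : ∀ y k, (y, k) ∉ V → c' y k = 1 := by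
          intro y k hyk
          by_cases hp : y = p.1 ∧ k = p.2
          · rw [hc'val, he]
            obtain ⟨h1, h2⟩ := hp
            subst h1; subst h2
            rw [hdlt_self, inv_mul_cancel]
          · have hyk' : (y, k) ∉ insert p V := by
              intro hmem
              rcases Finset.mem_insert.mp hmem with h | h
              · exact hp ⟨congrArg Prod.fst h, congrArg Prod.snd h⟩
              · exact hyk h
            rw [hc'val, hc y k hyk', he, hdlt_ne _ _ _ _ _ hp, inv_one, one_mul]
        have hc'eq : ∀ q ∈ V, c' q.1 q.2 = c q.1 q.2 := by
          intro q hq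
          have hqp : ¬(q.1 = p.1 ∧ q.2 = p.2) := by
            intro hh
            apply hpV
            have : q = p := Prod.ext hh.1 hh.2
            rw [← this]; exact hq
          rw [hc'val, he, hdlt_ne _ _ _ _ _ hqp, inv_one, one_mul]
        rw [hsplit, hphi_mul]
        have h1 : F e 0 j = 1 := hd p (Finset.mem_insert_self p V)
        have h2 : F c' 0 j = 1 := by
          apply ih c' hc'supp
          intro q hq
          rw [hc'eq q hq]
          exact hd q (Finset.mem_insert_of_mem hq)
        rw [h1, h2, mul_one]
  -- every component has a nontrivial delta image (else not surjective)
  have hex : ∀ j : Fin m, ∃ (x : Fin d → ℤ) (i : Fin m) (s : S),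
      F (dltGCA x i s) 0 j ≠ 1 := by
    intro j
    by_contra h
    push_neg at h
    obtain ⟨W, hW⟩ := hlocal j
    have hall : ∀ c : (Fin d → ℤ) → Fin m → S, F c 0 j = 1 := by
      intro c
      set c1 : (Fin d → ℤ) → Fin m → S := fun y k => if y ∈ W then c y k else 1 with hc1
      set c2 : (Fin d → ℤ) → Fin m → S := fun y k => if y ∈ W then 1 else c y k with hc2
      have hsplit : c = c1 * c2 := by
        funext y k
        show c y k = c1 y k * c2 y k
        by_cases hy : y ∈ W
        · simp [hc1, hc2, hy]
        · simp [hc1, hc2, hy]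
      rw [hsplit, hphi_mul]
      have h2 : F c2 0 j = 1 := by
        apply hW
        intro x hx i
        simp [hc2, hx]
      have h1 : F c1 0 j = 1 := by
        apply lemA j (W ×ˢ Finset.univ) c1
        · intro y k hyk
          have hy : y ∉ W := by
            intro hy
            exact hyk (Finset.mem_product.mpr ⟨hy, Finset.mem_univ _⟩)
          simp [hc1, hy]
        · intro p _
          exact h p.1 p.2 _
      rw [h1, h2, mul_one]
    obtain ⟨c, hcFc⟩ := hFsurj (dltGCA 0 j s0)
    have hcon := hall c
    rw [hcFc] at hcon
    rw [hdlt_self] at hcon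
    exact hs0 hcon
  -- the delta maps are homomorphisms; nontrivial ones are bijective
  have hpsi_mul : ∀ (j : Fin m) (x : Fin d → ℤ) (i : Fin m) (s t : S),
      F (dltGCA x i (s * t)) 0 j = F (dltGCA x i s) 0 j * F (dltGCA x i t) 0 j := by
    intro j x i s t
    rw [hdlt_mul, hphi_mul]
  have hpsi_bij : ∀ (j : Fin m) (x : Fin d → ℤ) (i : Fin m),
      (∃ s, F (dltGCA x i s) 0 j ≠ 1) →
      Function.Bijective (fun s : S => F (dltGCA x i s) 0 j) := by
    intro j x i ⟨s, hsnt⟩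
    set f : S →* S := MonoidHom.mk' (fun s : S => F (dltGCA x i s) 0 j)
      (hpsi_mul j x i) with hf
    have hker : f.ker = ⊥ ∨ f.ker = ⊤ := hSsimple.eq_bot_or_eq_top_of_normal _ f.normal_ker
    rcases hker with hk | hk
    · have hinj : Function.Injective f := f.ker_eq_bot_iff.mp hk
      exact Finite.injective_iff_bijective.mp hinj
    · exfalso
      apply hsnt
      have : s ∈ f.ker := by rw [hk]; trivial
      exact this
  -- uniqueness of the nontrivial delta position
  have huniq : ∀ (j : Fin m) (x y : Fin d → ℤ) (i k : Fin m),
      (∃ s, F (dltGCA x i s) 0 j ≠ 1) → (∃ t, F (dltGCA y k t) 0 j ≠ 1) →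
      (x, i) = ((y, k) : (Fin d → ℤ) × Fin m) := by
    intro j x y i k h1 h2
    by_contra hne
    have hb1 := hpsi_bij j x i h1
    have hb2 := hpsi_bij j y k h2
    obtain ⟨sa, hsa⟩ := hb1.surjective a0
    obtain ⟨tb, htb⟩ := hb2.surjective b0
    apply hab
    have hcomm : dltGCA x i sa * dltGCA y k tb = dltGCA (S := S) y k tb * dltGCA x i sa := by
      funext z l
      show dltGCA x i sa z l * dltGCA y k tb z l = dltGCA y k tb z l * dltGCA x i sa z l
      by_cases hz1 : z = x ∧ l = i
      · have hz2 : ¬(z = y ∧ l = k) := by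
          intro hh
          apply hne
          obtain ⟨e1, e2⟩ := hz1
          obtain ⟨e3, e4⟩ := hh
          subst e1; subst e2
          rw [e3, e4]
        rw [hdlt_ne _ _ _ _ _ hz2, mul_one, one_mul]
      · rw [hdlt_ne _ _ _ _ _ hz1, mul_one, one_mul]
    have := hphi_mul j (dltGCA x i sa) (dltGCA y k tb)
    rw [← hsa, ← htb]
    calc F (dltGCA x i sa) 0 j * F (dltGCA y k tb) 0 j
        = F (dltGCA x i sa * dltGCA y k tb) 0 j := (hphi_mul j _ _).symm
      _ = F (dltGCA y k tb * dltGCA x i sa) 0 j := by rw [hcomm]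
      _ = F (dltGCA y k tb) 0 j * F (dltGCA x i sa) 0 j := hphi_mul j _ _
  -- main structure: F is determined by one automorphism and one cell per component
  have key : ∀ j : Fin m, ∃ (uj : Fin d → ℤ) (ij : Fin m) (αj : S → S),
      (∀ s t, αj (s * t) = αj s * αj t) ∧ Function.Injective αj ∧
      ∀ (c : (Fin d → ℤ) → Fin m → S) (x' : Fin d → ℤ),
        F c x' j = αj (c (x' + uj) ij) := by
    intro j
    obtain ⟨x, i, s, hsnt⟩ := hex j
    have hnt : ∃ s, F (dltGCA x i s) 0 j ≠ 1 := ⟨s, hsnt⟩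
    refine ⟨x, i, fun s => F (dltGCA x i s) 0 j, hpsi_mul j x i,
      (hpsi_bij j x i hnt).injective, ?_⟩
    -- kernel step: c vanishing at (x, i) maps to 1
    have hker : ∀ c : (Fin d → ℤ) → Fin m → S, c x i = 1 → F c 0 j = 1 := by
      intro c hcxi
      obtain ⟨W, hW⟩ := hlocal j
      set c1 : (Fin d → ℤ) → Fin m → S := fun y k => if y ∈ W then c y k else 1 with hc1
      set c2 : (Fin d → ℤ) → Fin m → S := fun y k => if y ∈ W then 1 else c y k with hc2
      have hsplit : c = c1 * c2 := by
        funext y k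
        show c y k = c1 y k * c2 y k
        by_cases hy : y ∈ W
        · simp [hc1, hc2, hy]
        · simp [hc1, hc2, hy]
      rw [hsplit, hphi_mul]
      have h2 : F c2 0 j = 1 := by
        apply hW
        intro y hy i'
        simp [hc2, hy]
      have h1 : F c1 0 j = 1 := by
        apply lemA j (W ×ˢ Finset.univ) c1
        · intro y k hyk
          have hy : y ∉ W := by
            intro hy
            exact hyk (Finset.mem_product.mpr ⟨hy, Finset.mem_univ _⟩)
          simp [hc1, hy]
        · intro p _
          by_cases hp : p = ((x, i) : (Fin d → ℤ) × Fin m)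
          · subst hp
            have hval : c1 x i = 1 := by
              by_cases hx : x ∈ W
              · simp [hc1, hx, hcxi]
              · simp [hc1, hx]
            rw [hval, hdlt_one, hF1]; rfl
          · by_contra hnt'
            exact hp (huniq j p.1 x p.2 i ⟨_, hnt'⟩ hnt)
      rw [h1, h2, mul_one]
    have hrep0 : ∀ c : (Fin d → ℤ) → Fin m → S,
        F c 0 j = F (dltGCA x i (c x i)) 0 j := by
      intro c
      set e : (Fin d → ℤ) → Fin m → S := dltGCA x i (c x i) with he
      set c' : (Fin d → ℤ) → Fin m → S := e⁻¹ * c with hc'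
      have hsplit : c = e * c' := by rw [hc', mul_inv_cancel_left]
      have hc'xi : c' x i = 1 := by
        show (e x i)⁻¹ * c x i = 1
        rw [he, hdlt_self, inv_mul_cancel]
      rw [hsplit, hphi_mul, hker c' hc'xi, mul_one]
    intro c x'
    have hsh := congrFun (congrFun (hFshift x' c) 0) j
    -- hsh : F (fun v => c (v + x')) 0 j = F c (0 + x') j
    have hls : F (fun v => c (v + x')) 0 j
        = F (dltGCA x i ((fun v => c (v + x')) x i)) 0 j := hrep0 _
    rw [zero_add] at hsh
    rw [← hsh, hls]
    show F (dltGCA x i (c (x + x') i)) 0 j = F (dltGCA x i (c (x' + x) i)) 0 j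
    rw [add_comm x x']
  choose u τ α hαmul hαinj hrep using key
  have hα1 : ∀ j, α j 1 = 1 := by
    intro j
    have h := hαmul j 1 1
    rw [mul_one] at h
    exact left_eq_mul.mp h
  -- τ is injective
  have hτinj : Function.Injective τ := by
    intro j1 j2 hjj
    by_contra hne
    obtain ⟨c, hc⟩ := hFsurj (dltGCA 0 j2 s0)
    have h1 : ∀ y : Fin d → ℤ, c y (τ j1) = 1 := by
      intro y
      have h := hrep j1 c (y - u j1)
      rw [hc] at h
      have hdl : dltGCA (S := S) 0 j2 s0 (y - u j1) j1 = 1 := by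
        apply hdlt_ne
        intro hh
        exact hne hh.2
      rw [hdl] at h
      have h' : α j1 (c (y - u j1 + u j1) (τ j1)) = 1 := h.symm
      rw [sub_add_cancel] at h'
      apply hαinj j1
      rw [h', hα1]
    have h2 := hrep j2 c 0
    rw [hc, hdlt_self] at h2
    rw [← hjj] at h2
    rw [h1 (0 + u j2)] at h2
    rw [hα1] at h2
    exact hs0 h2
  -- orbit of z under τ is everything
  have hτbij : Function.Bijective τ := Finite.injective_iff_bijective.mp hτinj
  set z : Fin m := ⟨0, hm⟩ with hz
  have hperiod : ∃ p : ℕ, 0 < p ∧ τ^[p] z = z := by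
    obtain ⟨a, b, hne, heq⟩ := Finite.exists_ne_map_eq_of_infinite (fun n : ℕ => τ^[n] z)
    rcases Nat.lt_or_ge a b with hab' | hab'
    · refine ⟨b - a, by omega, ?_⟩
      have : τ^[a + (b - a)] z = τ^[a] (τ^[b - a] z) := Function.iterate_add_apply τ a (b - a) z
      rw [show a + (b - a) = b by omega] at this
      exact (hτinj.iterate a) (this.symm.trans heq.symm)
    · have hba : b < a := by omega
      refine ⟨a - b, by omega, ?_⟩
      have : τ^[b + (a - b)] z = τ^[b] (τ^[a - b] z) := Function.iterate_add_apply τ b (a - b) z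
      rw [show b + (a - b) = a by omega] at this
      exact (hτinj.iterate b) (this.symm.trans heq)
  have hOuniv : ∀ k : Fin m, ∃ n : ℕ, τ^[n] z = k := by
    by_contra h
    push_neg at h
    obtain ⟨k0, hk0⟩ := h
    obtain ⟨p, hp0, hpz⟩ := hperiod
    set O : Set (Fin m) := {k | ∃ n : ℕ, τ^[n] z = k} with hO
    apply hFmin
    refine ⟨O, Oᶜ, ⟨z, ⟨0, rfl⟩⟩, ⟨k0, fun hmem => ?_⟩,
      Set.union_compl_self O, Set.inter_compl_self O, ?_, ?_⟩
    · obtain ⟨n, hn⟩ := hmem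
      exact hk0 n hn
    · intro c hc
      intro x j hj
      have hτj : τ j ∉ O := by
        intro hmem
        obtain ⟨n, hn⟩ := hmem
        apply hj
        cases n with
        | zero =>
            -- hn : z = τ j ; use period
            have hstep : τ (τ^[p - 1] z) = τ^[p] z := by
              conv_rhs => rw [show p = (p - 1) + 1 by omega]
              exact (Function.iterate_succ_apply' τ (p - 1) z).symm
            rw [hpz] at hstep
            have : τ (τ^[p - 1] z) = τ j := by rw [hstep]; exact hn
            exact ⟨p - 1, hτinj this⟩
        | succ n' =>
            rw [Function.iterate_succ_apply'] at hn
            exact ⟨n', hτinj hn⟩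
      have hcv : c (x + u j) (τ j) = 1 := hc (x + u j) (τ j) hτj
      rw [hrep j c x, hcv, hα1]
    · intro c hc
      intro x j hj
      have hjO : j ∈ O := Set.not_notMem.mp hj
      obtain ⟨n, hn⟩ := hjO
      have hτj : τ j ∈ O := ⟨n + 1, by rw [Function.iterate_succ_apply', hn]⟩
      have hτj' : τ j ∉ Oᶜ := fun hh => hh hτj
      have hcv : c (x + u j) (τ j) = 1 := hc (x + u j) (τ j) hτj'
      rw [hrep j c x, hcv, hα1]
  -- minimal period equals m, and τ^[m] = id
  have hPex : ∃ n : ℕ, 0 < n ∧ τ^[n] z = z := hperiod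
  set p : ℕ := Nat.find hPex with hpdef
  obtain ⟨hp0, hpz⟩ : 0 < p ∧ τ^[p] z = z := Nat.find_spec hPex
  have hL1 : ∀ (q r : ℕ), τ^[p * q + r] z = τ^[r] z := by
    intro q
    induction q with
    | zero => intro r; simp
    | succ q ih =>
        intro r
        have harith : p * (q + 1) + r = (p * q + r) + p := by ring
        rw [harith, Function.iterate_add_apply, hpz, ih r]
  have hpm : p = m := by
    have hbij : Function.Bijective (fun t : Fin p => τ^[(t : ℕ)] z) := by
      constructor
      · intro t1 t2 ht
        have hgen : ∀ a b : ℕ, a ≤ b → b < p → τ^[a] z = τ^[b] z → a = b := by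
          intro a b hab' hbp heq'
          by_contra hne'
          have hlt : 0 < b - a := by omega
          have : τ^[a + (b - a)] z = τ^[a] (τ^[b - a] z) :=
            Function.iterate_add_apply τ a (b - a) z
          rw [show a + (b - a) = b by omega] at this
          have hz' : τ^[b - a] z = z := (hτinj.iterate a) (heq'.trans this).symm
          exact Nat.find_min hPex (by omega : b - a < p) ⟨hlt, hz'⟩
        rcases le_or_gt (t1 : ℕ) (t2 : ℕ) with hle | hlt
        · exact Fin.ext (hgen _ _ hle t2.2 ht)
        · exact Fin.ext (hgen _ _ (Nat.le_of_lt hlt) t1.2 ht.symm).symm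
      · intro k
        obtain ⟨n, hn⟩ := hOuniv k
        refine ⟨⟨n % p, Nat.mod_lt _ hp0⟩, ?_⟩
        show τ^[n % p] z = k
        have := hL1 (n / p) (n % p)
        rw [Nat.div_add_mod] at this
        rw [← this, hn]
    have := Fintype.card_of_bijective hbij
    simpa using this
  have hτm : ∀ k : Fin m, τ^[m] k = k := by
    intro k
    obtain ⟨n, hn⟩ := hOuniv k
    have h1 : τ^[m] (τ^[n] z) = τ^[m + n] z := (Function.iterate_add_apply τ m n z).symm
    have h2 : τ^[m + n] z = τ^[n] (τ^[m] z) := by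
      rw [add_comm]
      exact Function.iterate_add_apply τ n m z
    have hmz : τ^[m] z = z := by have h := hpz; rw [hpm] at h; exact h
    calc τ^[m] k = τ^[m] (τ^[n] z) := by rw [hn]
      _ = τ^[m + n] z := (Function.iterate_add_apply τ m n z).symm
      _ = τ^[n] (τ^[m] z) := h2
      _ = τ^[n] z := by rw [hmz]
      _ = k := hn
  -- the total shift vector
  set w : Fin d → ℤ := ∑ t ∈ Finset.range m, u (τ^[t] z) with hw
  have hwstep : ∀ j : Fin m, ∑ t ∈ Finset.range m, u (τ^[t] (τ j))
      = ∑ t ∈ Finset.range m, u (τ^[t] j) := by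
    intro j
    have h1 : ∑ t ∈ Finset.range (m + 1), u (τ^[t] j)
        = (∑ t ∈ Finset.range m, u (τ^[t] j)) + u (τ^[m] j) := Finset.sum_range_succ _ _
    have h2 : ∑ t ∈ Finset.range (m + 1), u (τ^[t] j)
        = (∑ t ∈ Finset.range m, u (τ^[t + 1] j)) + u (τ^[0] j) := Finset.sum_range_succ' _ _
    rw [hτm j] at h1
    simp only [Function.iterate_succ_apply, Function.iterate_zero_apply] at h2
    have h3 := h1.symm.trans h2
    exact (add_right_cancel h3).symm
  have hwall : ∀ j : Fin m, ∑ t ∈ Finset.range m, u (τ^[t] j) = w := by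
    have haux : ∀ n : ℕ, ∑ t ∈ Finset.range m, u (τ^[t] (τ^[n] z)) = w := by
      intro n
      induction n with
      | zero => simp [hw]
      | succ n ih =>
          rw [Function.iterate_succ_apply']
          rw [hwstep (τ^[n] z)]
          exact ih
    intro j
    obtain ⟨n, hn⟩ := hOuniv j
    rw [← hn]
    exact haux n
  -- iteration formula
  have hAiter : ∀ (k : ℕ) (c : (Fin d → ℤ) → Fin m → S) (x : Fin d → ℤ) (j : Fin m),
      F^[k] c x j = AiterGCA τ α k j
        (c (x + ∑ t ∈ Finset.range k, u (τ^[t] j)) (τ^[k] j)) := by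
    intro k
    induction k with
    | zero =>
        intro c x j
        simp [AiterGCA]
    | succ k ih =>
        intro c x j
        rw [Function.iterate_succ_apply']
        rw [hrep j (F^[k] c) x]
        rw [ih c (x + u j) (τ j)]
        show α j (AiterGCA τ α k (τ j)
            (c (x + u j + ∑ t ∈ Finset.range k, u (τ^[t] (τ j))) (τ^[k] (τ j))))
          = AiterGCA τ α (k + 1) j
            (c (x + ∑ t ∈ Finset.range (k + 1), u (τ^[t] j)) (τ^[k + 1] j))
        have hpos : x + u j + ∑ t ∈ Finset.range k, u (τ^[t] (τ j))
            = x + ∑ t ∈ Finset.range (k + 1), u (τ^[t] j) := by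
          have h2 : ∑ t ∈ Finset.range (k + 1), u (τ^[t] j)
              = (∑ t ∈ Finset.range k, u (τ^[t + 1] j)) + u (τ^[0] j) :=
            Finset.sum_range_succ' _ _
          simp only [Function.iterate_succ_apply, Function.iterate_zero_apply] at h2
          rw [h2]
          abel
        have hcomp : τ^[k] (τ j) = τ^[k + 1] j := (Function.iterate_succ_apply τ k j).symm
        rw [hpos, hcomp]
        rfl
  -- injectivity of the iterated maps
  have hAinj : ∀ (k : ℕ) (j : Fin m), Function.Injective (AiterGCA τ α k j) := by
    intro k
    induction k with
    | zero => intro j; exact fun a b h => h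
    | succ k ih =>
        intro j
        show Function.Injective (α j ∘ AiterGCA τ α k (τ j))
        exact (hαinj j).comp (ih (τ j))
  set A : Fin m → S → S := fun j => AiterGCA τ α m j with hA
  have hHm : ∀ (c : (Fin d → ℤ) → Fin m → S) (x : Fin d → ℤ) (j : Fin m),
      F^[m] c x j = A j (c (x + w) j) := by
    intro c x j
    rw [hAiter m c x j, hwall j, hτm j]
  have hHn : ∀ (n : ℕ) (c : (Fin d → ℤ) → Fin m → S) (x : Fin d → ℤ) (j : Fin m),
      F^[m * n] c x j = (A j)^[n] (c (x + n • w) j) := by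
    intro n
    induction n with
    | zero =>
        intro c x j
        simp
    | succ n ih =>
        intro c x j
        have harith : m * (n + 1) = m * n + m := by ring
        rw [harith, Function.iterate_add_apply]
        rw [ih (F^[m] c) x j]
        rw [hHm c (x + n • w) j]
        rw [Function.iterate_succ_apply (A j) n]
        congr 2
        rw [succ_nsmul, ← add_assoc]
  -- choose the power killing the automorphisms
  haveI : Fintype S := Fintype.ofFinite S
  set N : ℕ := Fintype.card (Equiv.Perm S) with hN
  have hN1 : 1 ≤ N := Fintype.card_pos
  have hAbij : ∀ j, Function.Bijective (A j) :=
    fun j => Finite.injective_iff_bijective.mp (hAinj m j)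
  have hApow : ∀ j, (A j)^[N] = id := by
    intro j
    have hpow : (Equiv.ofBijective (A j) (hAbij j) : Equiv.Perm S) ^ N = 1 :=
      pow_card_eq_one
    have : ⇑((Equiv.ofBijective (A j) (hAbij j) : Equiv.Perm S) ^ N) = (A j)^[N] :=
      Equiv.Perm.coe_pow _ N
    rw [hpow] at this
    rw [← this]
    rfl
  refine ⟨m * N, N • w, Nat.one_le_iff_ne_zero.mpr (by positivity), ?_⟩
  funext c x
  funext j
  rw [hHn N c x j, hApow j]
  rfl
end

section
/- Let d be a positive integer, S a finite non-abelian simple group, m ≥ 1, and G = S^m. Let F be a surjective GCA on G^{Z^d} that is minimal, i.e. there is no partition of {1, …, m} into two nonempty sets I and J such that F maps (∏_{i∈I} S_i)^{Z^d} into itself and maps (∏_{j∈J} S_j)^{Z^d} into itself. Then F is topologically transitive if and only if there is no integer q ≥ 1 with F^q equal to the identity map of G^{Z^d}. -/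
/-!
Each coordinate `c ↦ F c 0 i` is a continuous surjective homomorphism onto `S`. Its kernel is
open, so it is determined by finitely supported configurations, and as `S` is simple one of its
single-site restrictions is onto. Because `S` has trivial centre, a commutator computation shows
that it then depends on that site alone. Hence `F c v i = α i (c (v + u i) (π i))` with
`α i ∈ Aut S`, and surjectivity of `F` makes `π` a permutation, say `π^p = 1`. Then `F^p` shifts
layer `i` by `a i = ∑_{k<p} u (π^k i)`; this is `π`-invariant, hence constant `= w` by minimality.
If `w = 0`, `F^p` acts sitewise by an element of the finite group `(Aut S)^m`, so `F` is periodic.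
If `w ≠ 0`, the shift part of `F^(p n)` eventually separates any two cylinders, so `F` is
transitive. Finally, a periodic continuous map with a fixed point (the identity configuration)
on a Hausdorff space with two points is never transitive.
-/

open Function Finset
open Set (MapsTo)
open scoped Pointwise

theorem exists_finset_cylinder_subset {K : Type*} {G : K → Type*} [∀ k, TopologicalSpace (G k)]
    {U : Set (∀ k, G k)} (hU : IsOpen U) {x : ∀ k, G k} (hx : x ∈ U) :
    ∃ W : Finset K, {c | ∀ k ∈ W, c k = x k} ⊆ U := by
  obtain ⟨W, u, hu, hWU⟩ := isOpen_pi_iff.1 hU x hx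
  exact ⟨W, fun c hc => hWU fun k hk => hc k hk ▸ (hu k hk).2⟩

theorem center_eq_bot_of_isSimpleGroup {S : Type*} [Group S] [IsSimpleGroup S]
    (hS : ∃ a b : S, a * b ≠ b * a) : Subgroup.center S = ⊥ := by
  refine (IsSimpleGroup.eq_bot_or_eq_top_of_normal _ inferInstance).resolve_right fun htop => ?_
  obtain ⟨a, b, hab⟩ := hS
  exact hab (Subgroup.mem_center_iff.1 (htop ▸ Subgroup.mem_top b) a)

namespace MonoidHom

variable {K : Type*} [DecidableEq K] {G : K → Type*} [∀ k, Group (G k)] {S : Type*} [Group S]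

theorem eq_one_of_map_mulSingle_eq_one [∀ k, TopologicalSpace (G k)] [TopologicalSpace S]
    [DiscreteTopology S] {E : (∀ k, G k) →* S} (hE : Continuous E)
    (h : ∀ k x, E (Pi.mulSingle k x) = 1) : E = 1 := by
  obtain ⟨W, hW⟩ := exists_finset_cylinder_subset
    ((isOpen_discrete {1}).preimage hE) (x := 1) (by simp)
  ext c
  let cW : ∀ k, G k := fun k => if k ∈ W then c k else 1
  have hcW : cW ∈ E.ker := Submonoid.pi_mem_of_mulSingle_mem_aux W cW
    (fun k hk => if_neg hk) (fun k _ => h k _)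
  have hrest : cW⁻¹ * c ∈ E.ker := hW fun k hk => by simp [cW, hk]
  simpa using E.ker.mul_mem hcW hrest

theorem normal_range_comp_mulSingle {E : (∀ k, G k) →* S} (hE : Surjective E) (k : K) :
    (E.comp (MonoidHom.mulSingle G k)).range.Normal := by
  constructor
  rintro _ ⟨s, rfl⟩ g
  obtain ⟨c, rfl⟩ := hE g
  refine ⟨c k * s * (c k)⁻¹, ?_⟩
  have : Pi.mulSingle k (c k * s * (c k)⁻¹) = c * Pi.mulSingle k s * c⁻¹ := by
    ext j
    rcases eq_or_ne j k with rfl | hj <;> simp [*]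
  simp [this]

theorem exists_surjective_comp_mulSingle [∀ k, TopologicalSpace (G k)] [TopologicalSpace S]
    [DiscreteTopology S] [IsSimpleGroup S] {E : (∀ k, G k) →* S} (hE : Continuous E)
    (hEs : Surjective E) : ∃ k, Surjective (E.comp (MonoidHom.mulSingle G k)) := by
  by_contra! h
  have hbot : ∀ k x, E (Pi.mulSingle k x) = 1 := fun k x => by
    have := ((normal_range_comp_mulSingle hEs k).eq_bot_or_eq_top).resolve_right
      (mt MonoidHom.range_eq_top.1 (h k))
    exact DFunLike.congr_fun (MonoidHom.range_eq_bot_iff.1 this) x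
  obtain ⟨s, hs⟩ := exists_ne (1 : S)
  obtain ⟨c, hc⟩ := hEs s
  rw [eq_one_of_map_mulSingle_eq_one hE hbot, MonoidHom.one_apply] at hc
  exact hs hc.symm

theorem map_eq_map_mulSingle_of_surjective {E : (∀ k, G k) →* S} (hZ : Subgroup.center S = ⊥)
    {k : K} (hk : Surjective (E.comp (MonoidHom.mulSingle G k))) (c : ∀ k, G k) :
    E c = E (Pi.mulSingle k (c k)) := by
  set x := E c
  set y := E (Pi.mulSingle k (c k))
  suffices y⁻¹ * x ∈ Subgroup.center S by
    rw [hZ, Subgroup.mem_bot, inv_mul_eq_one] at this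
    exact this.symm
  refine Subgroup.mem_center_iff.2 fun g => ?_
  obtain ⟨s, hs⟩ := hk g
  have hcomm : Pi.mulSingle k s * c * (Pi.mulSingle k s)⁻¹ * c⁻¹ =
      Pi.mulSingle k s * Pi.mulSingle k (c k) * (Pi.mulSingle k s)⁻¹ *
        (Pi.mulSingle k (c k))⁻¹ := by
    ext j
    rcases eq_or_ne j k with rfl | hj <;> simp [*]
  have h : g * x * g⁻¹ * x⁻¹ = g * y * g⁻¹ * y⁻¹ := by
    rw [← hs]
    simpa using congrArg E hcomm
  calc g * (y⁻¹ * x) = y⁻¹ * (g * y * g⁻¹ * y⁻¹)⁻¹ * (g * x * g⁻¹ * x⁻¹) * x * g := by group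
    _ = y⁻¹ * x * g := by rw [h]; group

end MonoidHom

theorem Function.Injective.exists_iterate_eq_id {ι : Type*} [Finite ι] {π : ι → ι}
    (hπ : Injective π) : ∃ p, 0 < p ∧ π^[p] = id := by
  let σ := Equiv.ofBijective π (Finite.injective_iff_bijective.1 hπ)
  refine ⟨orderOf σ, (isOfFinOrder_of_finite σ).orderOf_pos, ?_⟩
  have h := congrArg (⇑) (pow_orderOf_eq_one σ)
  rw [Equiv.Perm.coe_pow, Equiv.Perm.coe_one] at h
  exact h

theorem sum_range_iterate_map_of_iterate_eq_id {ι M : Type*} [AddCancelCommMonoid M]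
    {π : ι → ι} {p : ℕ} (hp : π^[p] = id) (u : ι → M) (i : ι) :
    ∑ k ∈ range p, u (π^[k] (π i)) = ∑ k ∈ range p, u (π^[k] i) := by
  have h := (sum_range_succ' (fun k => u (π^[k] i)) p).symm.trans
    (sum_range_succ (fun k => u (π^[k] i)) p)
  simp only [iterate_succ_apply, hp, iterate_zero, id_eq] at h
  exact add_right_cancel h

section Dynamics

variable {X : Type*} [TopologicalSpace X]

theorem TopologicallyTransitive.of_iterate {T : X → X} {p : ℕ}
    (h : TopologicallyTransitive T^[p]) : TopologicallyTransitive T := by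
  intro U V hU hV hU' hV'
  obtain ⟨n, hn⟩ := h U V hU hV hU' hV'
  exact ⟨p * n, by rwa [iterate_mul]⟩

theorem not_topologicallyTransitive_of_iterate_eq_id [T2Space X] {T : X → X}
    (hT : Continuous T) {q : ℕ} (hq : 0 < q) (hTq : T^[q] = id) {x y : X} (hx : T x = x)
    (hxy : x ≠ y) : ¬ TopologicallyTransitive T := by
  intro htr
  obtain ⟨U, V, hU, hV, hxU, hyV, hUV⟩ := t2_separation hxy
  have hopen : IsOpen (⋂ k ∈ range q, T^[k] ⁻¹' U) :=
    isOpen_biInter_finset fun k _ => hU.preimage (hT.iterate k)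
  obtain ⟨n, _, ⟨c, hc, rfl⟩, hcV⟩ := htr _ V hopen hV
    ⟨x, by simpa [iterate_fixed hx] using fun _ _ => hxU⟩ ⟨y, hyV⟩
  have hper : IsPeriodicPt T q c := congrFun hTq c
  have hcU : T^[n] c ∈ U := by
    rw [← hper.iterate_mod_apply]
    exact Set.mem_iInter₂.1 hc _ (mem_range.2 (Nat.mod_lt n hq))
  exact hUV.le_bot ⟨hcU, hcV⟩

end Dynamics

section TwistedShift

variable {V ι S : Type*} [AddCommGroup V] [Group S]

def twistedShift (u : ι → V) (π : ι → ι) (α : ι → MulAut S) (c : V → ι → S) : V → ι → S :=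
  fun v i => α i (c (v + u i) (π i))

def HasInvariantSplitting (F : (V → ι → S) → (V → ι → S)) : Prop :=
  ∃ I J : Set ι, I.Nonempty ∧ J.Nonempty ∧ I ∪ J = Set.univ ∧ I ∩ J = ∅ ∧
    MapsTo F {c | ∀ x, ∀ j ∉ I, c x j = 1} {c | ∀ x, ∀ j ∉ I, c x j = 1} ∧
    MapsTo F {c | ∀ x, ∀ j ∉ J, c x j = 1} {c | ∀ x, ∀ j ∉ J, c x j = 1}

@[simp]
theorem twistedShift_zero_id_one : twistedShift (0 : ι → V) id (1 : ι → MulAut S) = id := by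
  funext c v i
  simp [twistedShift]

theorem twistedShift_comp (u u' : ι → V) (π π' : ι → ι) (α α' : ι → MulAut S) :
    twistedShift u π α ∘ twistedShift u' π' α' =
      twistedShift (u + u' ∘ π) (π' ∘ π) (fun i => α i * α' (π i)) := by
  funext c v i
  simp [twistedShift, add_assoc]

theorem twistedShift_iterate (u : ι → V) (π : ι → ι) (α : ι → MulAut S) (n : ℕ) :
    ∃ γ, (twistedShift u π α)^[n] =
      twistedShift (fun i => ∑ k ∈ range n, u (π^[k] i)) π^[n] γ := by
  induction n with
  | zero =>
    refine ⟨1, ?_⟩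
    simp only [sum_range_zero, iterate_zero]
    exact twistedShift_zero_id_one.symm
  | succ n ih =>
    obtain ⟨γ, hγ⟩ := ih
    refine ⟨fun i => γ i * α (π^[n] i), ?_⟩
    rw [iterate_succ, hγ, twistedShift_comp, ← iterate_succ']
    congr 1
    funext i
    simp [sum_range_succ]

theorem twistedShift_id_iterate (u : ι → V) (γ : ι → MulAut S) (n : ℕ) :
    (twistedShift u id γ)^[n] = twistedShift (n • u) id (γ ^ n) := by
  induction n with
  | zero => simp
  | succ n ih =>
    rw [iterate_succ, ih, twistedShift_comp, succ_nsmul, pow_succ]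
    rfl

theorem mapsTo_twistedShift (u : ι → V) {π : ι → ι} (α : ι → MulAut S) {I : Set ι}
    (hI : MapsTo π Iᶜ Iᶜ) :
    MapsTo (twistedShift u π α) {c | ∀ x, ∀ j ∉ I, c x j = 1} {c | ∀ x, ∀ j ∉ I, c x j = 1} :=
  fun c hc x j hj => by simp [twistedShift, hc _ _ (hI hj)]

theorem eq_of_forall_apply_map_eq {u : ι → V} {π : ι → ι} {α : ι → MulAut S}
    (hmin : ¬ HasInvariantSplitting (twistedShift u π α)) {β : Type*} {a : ι → β}
    (ha : ∀ i, a (π i) = a i) (i j : ι) : a i = a j := by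
  by_contra hij
  refine hmin ⟨{k | a k = a i}, {k | a k ≠ a i}, ⟨i, rfl⟩, ⟨j, Ne.symm hij⟩, ?_, ?_,
    mapsTo_twistedShift u α fun k hk => ?_, mapsTo_twistedShift u α fun k hk => ?_⟩
  · ext k; simp [em]
  · ext k; simp
  all_goals simpa [ha] using hk

theorem injective_of_surjective_twistedShift [Nontrivial S] {u : ι → V} {π : ι → ι}
    {α : ι → MulAut S} (h : Surjective (twistedShift u π α)) : Injective π := by
  classical
  intro i i' hii'
  by_contra hne
  obtain ⟨s, hs⟩ := exists_ne (1 : S)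
  obtain ⟨c, hc⟩ := h fun _ j => if j = i' then s else 1
  have h1 : ∀ v, c v (π i) = 1 := fun v => by
    simpa [twistedShift, hne] using congrFun (congrFun hc (v - u i)) i
  have h2 := congrFun (congrFun hc (-u i')) i'
  simp only [twistedShift, neg_add_cancel, ← hii', h1, map_one, ↓reduceIte] at h2
  exact hs h2.symm

theorem topologicallyTransitive_twistedShift [TopologicalSpace S] [IsAddTorsionFree V] {w : V}
    (hw : w ≠ 0) (γ : ι → MulAut S) :
    TopologicallyTransitive (twistedShift (fun _ => w) id γ) := by
  classical
  intro U U' hU hU' ⟨x, hx⟩ ⟨y, hy⟩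
  obtain ⟨E, hE⟩ := exists_finset_cylinder_subset hU hx
  obtain ⟨E', hE'⟩ := exists_finset_cylinder_subset hU' hy
  have hinj : Injective fun n : ℕ => n • w :=
    injective_nsmul_iff_not_isOfFinAddOrder.2 (not_isOfFinAddOrder_of_isAddTorsionFree hw)
  obtain ⟨_, ⟨n, rfl⟩, hn⟩ := (Set.infinite_range_of_injective hinj).exists_notMem_finset (E - E')
  let c : V → ι → S := fun v i =>
    if v - n • w ∈ E' then (γ i ^ n).symm (y (v - n • w) i) else x v i
  refine ⟨n, _, ⟨c, hE fun v hv => ?_, rfl⟩, hE' fun v hv => ?_⟩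
  · have : v - n • w ∉ E' := fun h => hn (by simpa using sub_mem_sub hv h)
    funext i
    simp [c, this]
  · funext i
    simp [twistedShift_id_iterate, twistedShift, c, hv]

theorem MonoidHom.exists_eq_twistedShift [Finite ι] [Finite S] [TopologicalSpace S]
    [DiscreteTopology S] [IsSimpleGroup S] (hZ : Subgroup.center S = ⊥)
    (F : (V → ι → S) →* (V → ι → S)) (hFc : Continuous F)
    (hFshift : ∀ (u : V) (c : V → ι → S), F (fun v => c (v + u)) = fun v => F c (v + u))
    (hFs : Surjective F) : ∃ u π α, ⇑F = twistedShift (V := V) (S := S) u π α := by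
  classical
  have hlocal : ∀ i, ∃ (v₀ : V) (j₀ : ι) (α : MulAut S), ∀ c, F c 0 i = α (c v₀ j₀) := by
    intro i
    let E := (Pi.evalMonoidHom _ i).comp ((Pi.evalMonoidHom _ 0).comp F)
    have hEs : Surjective E := fun s => by
      obtain ⟨c, hc⟩ := hFs fun _ _ => s
      exact ⟨c, by simp [E, hc]⟩
    obtain ⟨v₀, hv₀⟩ := exists_surjective_comp_mulSingle
      ((continuous_apply i).comp ((continuous_apply 0).comp hFc)) hEs
    obtain ⟨j₀, hj₀⟩ := exists_surjective_comp_mulSingle continuous_of_discreteTopology hv₀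
    refine ⟨v₀, j₀, MulEquiv.ofBijective _ (Finite.surjective_iff_bijective.1 hj₀), fun c => ?_⟩
    calc F c 0 i = E c := rfl
      _ = E.comp (MonoidHom.mulSingle _ v₀) (c v₀) :=
        MonoidHom.map_eq_map_mulSingle_of_surjective hZ hv₀ c
      _ = _ := MonoidHom.map_eq_map_mulSingle_of_surjective hZ hj₀ (c v₀)
  choose v₀ j₀ α hα using hlocal
  refine ⟨v₀, j₀, α, funext fun c => funext fun v => funext fun i => ?_⟩
  have hshift := congrFun (hFshift v c) 0
  rw [zero_add] at hshift
  rw [twistedShift, ← hshift, hα, add_comm]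

end TwistedShift

theorem stmt15_general (d : ℕ)
    (S : Type*) [Group S] [Finite S] [TopologicalSpace S] [DiscreteTopology S]
    (hSsimple : IsSimpleGroup S) (hSnonab : ∃ a b : S, a * b ≠ b * a)
    (m : ℕ) (hm : 1 ≤ m)
    (F : ((Fin d → ℤ) → Fin m → S) → ((Fin d → ℤ) → Fin m → S))
    (hFcont : Continuous F)
    (hFhom : ∀ a b : (Fin d → ℤ) → Fin m → S, F (a * b) = F a * F b)
    (hFshift : ∀ (u : Fin d → ℤ) (c : (Fin d → ℤ) → Fin m → S),
      F (fun v => c (v + u)) = fun v => F c (v + u))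
    (hFsurj : Function.Surjective F)
    (hFmin : ¬ ∃ I J : Set (Fin m), I.Nonempty ∧ J.Nonempty ∧
      I ∪ J = Set.univ ∧ I ∩ J = ∅ ∧
      Set.MapsTo F {c | ∀ x, ∀ j ∉ I, c x j = 1} {c | ∀ x, ∀ j ∉ I, c x j = 1} ∧
      Set.MapsTo F {c | ∀ x, ∀ j ∉ J, c x j = 1} {c | ∀ x, ∀ j ∉ J, c x j = 1}) :
    TopologicallyTransitive F ↔ ¬ ∃ q : ℕ, 1 ≤ q ∧ F^[q] = id := by
  have hF1 : F 1 = 1 := map_one (MonoidHom.mk' F hFhom)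
  obtain ⟨u, π, α, hF⟩ := (MonoidHom.mk' F hFhom).exists_eq_twistedShift
    (center_eq_bot_of_isSimpleGroup hSnonab) hFcont hFshift hFsurj
  change F = _ at hF
  subst hF
  obtain ⟨p, hp, hπp⟩ := (injective_of_surjective_twistedShift hFsurj).exists_iterate_eq_id
  obtain ⟨γ, hFp⟩ := twistedShift_iterate u π α p
  set w := ∑ k ∈ range p, u (π^[k] ⟨0, hm⟩)
  have hFp' : (twistedShift u π α)^[p] = twistedShift (fun _ => w) id γ := by
    rw [hFp, hπp]
    congr 1
    funext i
    exact eq_of_forall_apply_map_eq (a := fun i => ∑ k ∈ range p, u (π^[k] i)) hFmin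
      (sum_range_iterate_map_of_iterate_eq_id hπp u) i _
  constructor
  · rintro htr ⟨q, hq, hFq⟩
    obtain ⟨s, hs⟩ := exists_ne (1 : S)
    exact not_topologicallyTransitive_of_iterate_eq_id hFcont hq hFq hF1
      (y := fun _ _ => s) (fun h => hs (congrFun (congrFun h 0) ⟨0, hm⟩).symm) htr
  · intro hnp
    by_cases hw : w = 0
    · refine absurd ⟨p * orderOf γ, Nat.mul_pos hp (isOfFinOrder_of_finite γ).orderOf_pos, ?_⟩ hnp
      rw [iterate_mul, hFp', twistedShift_id_iterate, pow_orderOf_eq_one, hw]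
      convert twistedShift_zero_id_one using 2
      exact smul_zero _
    · exact TopologicallyTransitive.of_iterate (hFp' ▸ topologicallyTransitive_twistedShift hw γ)

theorem stmt15 (d : ℕ) (hd : 0 < d)
    (S : Type*) [Group S] [Finite S] [TopologicalSpace S] [DiscreteTopology S]
    (hSsimple : IsSimpleGroup S) (hSnonab : ∃ a b : S, a * b ≠ b * a)
    (m : ℕ) (hm : 1 ≤ m)
    (F : ((Fin d → ℤ) → Fin m → S) → ((Fin d → ℤ) → Fin m → S))
    (hFcont : Continuous F)
    (hFhom : ∀ a b : (Fin d → ℤ) → Fin m → S, F (a * b) = F a * F b)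
    (hFshift : ∀ (u : Fin d → ℤ) (c : (Fin d → ℤ) → Fin m → S),
      F (fun v => c (v + u)) = fun v => F c (v + u))
    (hFsurj : Function.Surjective F)
    (hFmin : ¬ ∃ I J : Set (Fin m), I.Nonempty ∧ J.Nonempty ∧
      I ∪ J = Set.univ ∧ I ∩ J = ∅ ∧
      Set.MapsTo F {c | ∀ x, ∀ j ∉ I, c x j = 1} {c | ∀ x, ∀ j ∉ I, c x j = 1} ∧
      Set.MapsTo F {c | ∀ x, ∀ j ∉ J, c x j = 1} {c | ∀ x, ∀ j ∉ J, c x j = 1}) :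
    TopologicallyTransitive F ↔ ¬ ∃ q : ℕ, 1 ≤ q ∧ F^[q] = id :=
  stmt15_general d S hSsimple hSnonab m hm F hFcont hFhom hFshift hFsurj hFmin
end
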